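/- arXiv:1712.03736 — 3 statements merged into one kernel-verified Lean document; each statement's English description precedes it below -/
import Mathlib

section
/- For β > 5, the SOS contour weights w_β(γ) = 1/(e^{β|γ̃|} − 1) satisfy the Kotecký–Preiss criterion: for every dual vertex x*, Σ_{γ : x*∈γ} e^{(β−4)|γ̃|}/(e^{β|γ̃|} − 1) ≤ 1. -/
open scoped ENNReal

abbrev V : Type := ℤ × ℤ

/-- Nearest-neighbour adjacency on the dual lattice `(ℤ²)*` (indexed by `ℤ²`). -/
def adj (x y : V) : Prop := |x.1 - y.1| + |x.2 - y.2| = 1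

/-- An edge of the dual lattice. -/
def IsDualEdge (e : Sym2 V) : Prop := ∃ x y : V, adj x y ∧ e = s(x, y)

def north (x : V) : V := (x.1, x.2 + 1)
def south (x : V) : V := (x.1, x.2 - 1)
def east (x : V) : V := (x.1 + 1, x.2)
def west (x : V) : V := (x.1 - 1, x.2)

/-- Two dual edges meeting at `x` are linked if they both lie on the same side of the line
making an angle `π/4` with the horizontal and passing through `x`. -/
def LinkedAt (x : V) (e f : Sym2 V) : Prop :=
  ({e, f} : Set (Sym2 V)) = {s(x, north x), s(x, west x)} ∨
  ({e, f} : Set (Sym2 V)) = {s(x, south x), s(x, east x)}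

def cyc {n : ℕ} (i : Fin n) : Fin n := ⟨(i.val + 1) % n, Nat.mod_lt _ i.pos⟩

def IsContourFun {n : ℕ} (e : Fin n → Sym2 V) : Prop :=
  Function.Injective e ∧ (∀ i, IsDualEdge (e i)) ∧
  (∀ i, ∃ x : V, x ∈ e i ∧ x ∈ e (cyc i)) ∧
  (∀ i j : Fin n, i ≠ j → ∀ x : V,
    x ∈ e i → x ∈ e (cyc i) → x ∈ e j → x ∈ e (cyc j) →
    LinkedAt x (e i) (e (cyc i)) ∧ LinkedAt x (e j) (e (cyc j)))

/-- A geometric contour: a finite set of dual edges that forms a contour sequence. -/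
def IsGeomContour (γ : Finset (Sym2 V)) : Prop :=
  ∃ (n : ℕ) (e : Fin n → Sym2 V), IsContourFun e ∧ γ = Finset.image e Finset.univ

/-! Read a contour through `x` cyclically, starting from an edge at `x`. Each edge is then
determined by its predecessor together with one of that predecessor's two endpoints and one of
four directions, so signed contours of length `n` through `x` inject into `2 · 8ⁿ` codes (a
cruder count than `8 · 3ⁿ⁻²`, but enough). Since `e^{βn} ≥ 2` once `βn ≥ 1`, the weight of length
`n` is at most `2e^{-4n}`, and `e⁴ > 48` gives `8ⁿ · 2e^{-4n} ≤ 3⁻ⁿ`; summing over `n ≥ 1` and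
both signs yields `2 · 1/2 = 1`. -/

def dir : Fin 4 → V := ![(0, 1), (0, -1), (1, 0), (-1, 0)]

lemma exists_dir_of_adj {u w : V} (h : adj u w) : ∃ d, w = u + dir d := by
  have : (w.1 = u.1 ∧ w.2 = u.2 + 1) ∨ (w.1 = u.1 ∧ w.2 = u.2 - 1) ∨
      (w.1 = u.1 + 1 ∧ w.2 = u.2) ∨ (w.1 = u.1 - 1 ∧ w.2 = u.2) := by
    unfold adj at h
    rcases abs_cases (u.1 - w.1) with ⟨_, _⟩ | ⟨_, _⟩ <;>
      rcases abs_cases (u.2 - w.2) with ⟨_, _⟩ | ⟨_, _⟩ <;> omega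
  simpa [Fin.exists_fin_succ, dir, Prod.ext_iff, sub_eq_add_neg] using this

lemma adj_comm {u w : V} : adj u w ↔ adj w u := by
  simp only [adj, abs_sub_comm u.1, abs_sub_comm u.2]

lemma IsDualEdge.exists_eq_dir {e : Sym2 V} (he : IsDualEdge e) {v : V} (hv : v ∈ e) :
    ∃ d, e = s(v, v + dir d) := by
  obtain ⟨a, b, hab, rfl⟩ := he
  rcases Sym2.mem_iff.1 hv with rfl | rfl
  · obtain ⟨d, rfl⟩ := exists_dir_of_adj hab
    exact ⟨d, rfl⟩
  · obtain ⟨d, rfl⟩ := exists_dir_of_adj (adj_comm.1 hab)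
    exact ⟨d, Sym2.eq_swap⟩

noncomputable def endpoint (e : Sym2 V) (b : Bool) : V :=
  if b then (Quot.out e).1 else (Quot.out e).2

lemma exists_endpoint_eq {e : Sym2 V} {v : V} (hv : v ∈ e) : ∃ b, endpoint e b = v := by
  rw [← Quot.out_eq e] at hv
  rcases Sym2.mem_iff.1 hv with h | h
  · exact ⟨true, h.symm⟩
  · exact ⟨false, h.symm⟩

noncomputable def step (e : Sym2 V) (p : Bool × Fin 4) : Sym2 V :=
  s(endpoint e p.1, endpoint e p.1 + dir p.2)

lemma exists_step_eq {e e' : Sym2 V} (he' : IsDualEdge e') {v : V} (hv : v ∈ e) (hv' : v ∈ e') :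
    ∃ p, step e p = e' := by
  obtain ⟨b, rfl⟩ := exists_endpoint_eq hv
  obtain ⟨d, rfl⟩ := he'.exists_eq_dir hv'
  exact ⟨(b, d), rfl⟩

/-- Starting from the degenerate edge `s(x, x)` makes the first edge of a contour a `step` too. -/
noncomputable def walk (x : V) {n : ℕ} (f : Fin n → Bool × Fin 4) : ℕ → Sym2 V
  | 0 => s(x, x)
  | k + 1 => if h : k < n then step (walk x f k) (f ⟨k, h⟩) else walk x f k

noncomputable def walkContour (x : V) {n : ℕ} (f : Fin n → Bool × Fin 4) : Finset (Sym2 V) :=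
  Finset.univ.image fun i : Fin n => walk x f (i + 1)

lemma cyc_eq_add_one {n : ℕ} [NeZero n] (i : Fin n) : cyc i = i + 1 := by
  ext
  simp [cyc, Fin.val_add]

lemma exists_walk_eq {n : ℕ} [NeZero n] {x : V} {e : Fin n → Sym2 V}
    (hdual : ∀ i, IsDualEdge (e i)) (hchain : ∀ i, ∃ v, v ∈ e i ∧ v ∈ e (cyc i)) (hx : x ∈ e 0) :
    ∃ f : Fin n → Bool × Fin 4, ∀ i : Fin n, walk x f (i + 1) = e i := by
  have hstep : ∀ j : Fin n, ∃ p, (j.val = 0 → step s(x, x) p = e j) ∧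
      (∀ i : Fin n, j.val = i.val + 1 → step (e i) p = e j) := by
    intro j
    rcases hj : j.val with _ | m
    · have hj0 : j = 0 := Fin.ext hj
      obtain ⟨p, hp⟩ := exists_step_eq (hdual j) (Sym2.mem_mk_left x x) (hj0 ▸ hx)
      exact ⟨p, fun _ => hp, fun _ h => absurd h (by omega)⟩
    · let i : Fin n := ⟨m, by omega⟩
      obtain ⟨v, hv, hv'⟩ := hchain i
      have hcyc : cyc i = j := by
        ext
        simp [cyc, i, ← hj, Nat.mod_eq_of_lt j.isLt]
      obtain ⟨p, hp⟩ := exists_step_eq (hdual j) hv (hcyc ▸ hv')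
      refine ⟨p, fun h => absurd h (by omega), fun i' h => ?_⟩
      rwa [show i' = i from Fin.ext (show i'.val = m by omega)]
  choose f hf₀ hf₁ using hstep
  refine ⟨f, fun ⟨k, hk⟩ => ?_⟩
  induction k with
  | zero => simpa [walk, hk] using hf₀ ⟨0, hk⟩ rfl
  | succ k ih =>
    rw [walk, dif_pos hk, ih (by omega)]
    exact hf₁ _ _ rfl

lemma IsGeomContour.exists_eq_walkContour {γ : Finset (Sym2 V)} (hγ : IsGeomContour γ) {x : V}
    (hx : ∃ ε ∈ γ, x ∈ ε) :
    ∃ (n : ℕ) (f : Fin n → Bool × Fin 4), γ = walkContour x f ∧ γ.card = n := by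
  obtain ⟨n, e, ⟨he_inj, hdual, hchain, -⟩, rfl⟩ := hγ
  obtain ⟨ε, hε, hxε⟩ := hx
  obtain ⟨j, -, rfl⟩ := Finset.mem_image.1 hε
  have : NeZero n := NeZero.of_pos j.pos
  obtain ⟨f, hf⟩ := exists_walk_eq (e := fun i => e (j + i)) (fun i => hdual _)
    (fun i => by simpa only [cyc_eq_add_one, add_assoc] using hchain (j + i))
    (by simpa only [add_zero] using hxε)
  refine ⟨n, f, ?_, by rw [Finset.card_image_of_injective _ he_inj, Finset.card_univ,
    Fintype.card_fin]⟩
  ext ε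
  simp only [walkContour, hf, Finset.mem_image, Finset.mem_univ, true_and]
  exact ⟨fun ⟨i, h⟩ => ⟨i - j, by simpa using h⟩, fun ⟨i, h⟩ => ⟨j + i, h⟩⟩

abbrev SignedWalkCode : Type := (Σ n : ℕ, Fin n → Bool × Fin 4) × Bool

lemma tsum_signedWalkCode_eq (w : ℕ → ℝ≥0∞) :
    ∑' t : SignedWalkCode, w t.1.1 = 2 * ∑' n : ℕ, 8 ^ n * w n := by
  rw [ENNReal.tsum_prod', ← ENNReal.tsum_mul_left, ENNReal.tsum_sigma']
  refine tsum_congr fun n => ?_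
  simp [tsum_fintype, two_mul]

noncomputable def sosKPWeight (β : ℝ) (n : ℕ) : ℝ≥0∞ :=
  ENNReal.ofReal (Real.exp ((β - 4) * n) / (Real.exp (β * n) - 1))

lemma sosKPWeight_zero (β : ℝ) : sosKPWeight β 0 = 0 := by
  simp [sosKPWeight]

lemma forty_eight_lt_exp_four : 48 < Real.exp 4 := by
  have h := Real.exp_one_gt_d9
  rw [show (4 : ℝ) = (4 : ℕ) * 1 by norm_num, Real.exp_nat_mul]
  nlinarith [pow_le_pow_left₀ (by norm_num) h.le 4]

lemma exp_div_exp_sub_one_le {β t : ℝ} (h : 1 ≤ β * t) :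
    Real.exp ((β - 4) * t) / (Real.exp (β * t) - 1) ≤ 2 * Real.exp (-(4 * t)) := by
  have two_le : 2 ≤ Real.exp (β * t) := by linarith [Real.add_one_le_exp (β * t)]
  rw [div_le_iff₀ (by linarith), show (β - 4) * t = -(4 * t) + β * t by ring, Real.exp_add]
  nlinarith [Real.exp_pos (-(4 * t))]

lemma eight_pow_mul_two_mul_pow_le {q : ℝ} (hq₀ : 0 ≤ q) (hq : 24 * q ≤ 2⁻¹) (n : ℕ) :
    8 ^ (n + 1) * (2 * q ^ (n + 1)) ≤ (3⁻¹ : ℝ) ^ (n + 1) := by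
  have hpow : (24 * q) ^ (n + 1) ≤ 24 * q :=
    pow_le_of_le_one (by positivity) (by linarith) (by omega)
  have h8 : (24 : ℝ) ^ (n + 1) * 3⁻¹ ^ (n + 1) = 8 ^ (n + 1) := by rw [← mul_pow]; norm_num
  calc (8 : ℝ) ^ (n + 1) * (2 * q ^ (n + 1)) = 2 * (24 * q) ^ (n + 1) * 3⁻¹ ^ (n + 1) := by
        rw [mul_pow, ← h8]; ring
    _ ≤ 3⁻¹ ^ (n + 1) := mul_le_of_le_one_left (by positivity) (by linarith)

lemma eight_pow_mul_sosKPWeight_le {β : ℝ} (hβ : 1 ≤ β) (n : ℕ) :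
    8 ^ (n + 1) * sosKPWeight β (n + 1) ≤ 3⁻¹ ^ (n + 1) := by
  have hw := exp_div_exp_sub_one_le (β := β) (t := (n + 1 : ℕ))
    (by push_cast; nlinarith [n.cast_nonneg (α := ℝ)])
  have hq : 24 * Real.exp (-4) ≤ 2⁻¹ := by
    rw [Real.exp_neg, ← div_eq_mul_inv, div_le_iff₀ (Real.exp_pos 4)]
    linarith [forty_eight_lt_exp_four]
  rw [show -(4 * ((n + 1 : ℕ) : ℝ)) = (n + 1 : ℕ) * (-4) by ring, Real.exp_nat_mul] at hw
  calc 8 ^ (n + 1) * sosKPWeight β (n + 1)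
      ≤ ENNReal.ofReal (8 ^ (n + 1) * (2 * Real.exp (-4) ^ (n + 1))) := by
        rw [ENNReal.ofReal_mul (by positivity), ENNReal.ofReal_pow (by norm_num)]
        exact mul_le_mul' (by simp) (ENNReal.ofReal_le_ofReal hw)
    _ ≤ ENNReal.ofReal (3⁻¹ ^ (n + 1)) :=
        ENNReal.ofReal_le_ofReal (eight_pow_mul_two_mul_pow_le (Real.exp_pos _).le hq n)
    _ = 3⁻¹ ^ (n + 1) := by
        rw [ENNReal.ofReal_pow (by norm_num), ENNReal.ofReal_inv_of_pos (by norm_num)]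
        simp

lemma ENNReal.tsum_inv_three_pow_succ : ∑' n : ℕ, (3⁻¹ : ℝ≥0∞) ^ (n + 1) = 2⁻¹ := by
  have h : (1 : ℝ≥0∞) - 3⁻¹ = 2 * 3⁻¹ := by
    refine ENNReal.sub_eq_of_eq_add (by simp) ?_
    rw [← add_one_mul, two_add_one_eq_three, ENNReal.mul_inv_cancel (by simp) (by simp)]
  simp only [pow_succ, ENNReal.tsum_mul_right, ENNReal.tsum_geometric]
  rw [h, ENNReal.mul_inv (by simp) (by simp), inv_inv, mul_assoc,
    ENNReal.mul_inv_cancel (by simp) (by simp), mul_one]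

lemma tsum_eight_pow_mul_sosKPWeight_le {β : ℝ} (hβ : 1 ≤ β) :
    ∑' n : ℕ, 8 ^ n * sosKPWeight β n ≤ 2⁻¹ :=
  calc ∑' n : ℕ, 8 ^ n * sosKPWeight β n
      = ∑' n : ℕ, 8 ^ (n + 1) * sosKPWeight β (n + 1) := by
        rw [tsum_eq_zero_add' ENNReal.summable, sosKPWeight_zero, mul_zero, zero_add]
    _ ≤ ∑' n : ℕ, 3⁻¹ ^ (n + 1) := ENNReal.tsum_le_tsum (eight_pow_mul_sosKPWeight_le hβ)
    _ = 2⁻¹ := ENNReal.tsum_inv_three_pow_succ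

/-- For `β > 5` the SOS weights `w_β(γ) = 1/(e^{β|γ̃|} − 1)` satisfy the Kotecký–Preiss
criterion: for every dual vertex `x`,
`Σ_{γ ∋ x} e^{(β−4)|γ̃|}/(e^{β|γ̃|} − 1) ≤ 1`, the sum ranging over signed contours. -/
theorem sos_weights_satisfy_kp (β : ℝ) (hβ : 5 < β) (x : V) :
    (∑' γ : {γ : Finset (Sym2 V) × Bool // IsGeomContour γ.1 ∧ ∃ e ∈ γ.1, x ∈ e},
        ENNReal.ofReal
          (Real.exp ((β - 4) * (γ.1.1.card : ℝ)) / (Real.exp (β * (γ.1.1.card : ℝ)) - 1)))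
      ≤ 1 := by
  have hcode : ∀ γ : {γ : Finset (Sym2 V) × Bool // IsGeomContour γ.1 ∧ ∃ e ∈ γ.1, x ∈ e},
      ∃ t : SignedWalkCode,
        γ.1 = (walkContour x t.1.2, t.2) ∧ γ.1.1.card = t.1.1 := by
    rintro ⟨⟨γ, sign⟩, hγ, hx⟩
    obtain ⟨n, f, rfl, hcard⟩ := hγ.exists_eq_walkContour hx
    exact ⟨(⟨n, f⟩, sign), rfl, hcard⟩
  choose code hcode_eq hcode_card using hcode
  have hcode_inj : Function.Injective code := fun γ γ' h =>
    Subtype.ext (by rw [hcode_eq γ, hcode_eq γ', h])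
  calc _ = ∑' γ, sosKPWeight β (code γ).1.1 := tsum_congr fun γ => by
        rw [sosKPWeight, ← hcode_card]
    _ ≤ ∑' t : SignedWalkCode, sosKPWeight β t.1.1 :=
        ENNReal.tsum_comp_le_tsum_of_injective hcode_inj _
    _ = 2 * ∑' n : ℕ, 8 ^ n * sosKPWeight β n := tsum_signedWalkCode_eq _
    _ ≤ 2 * 2⁻¹ := by gcongr; exact tsum_eight_pow_mul_sosKPWeight_le (by linarith)
    _ = 1 := ENNReal.mul_inv_cancel two_ne_zero ENNReal.ofNat_ne_top
end

section
/- For a signed contour γ, the map u ↦ w^u_n(γ) is monotone: decreasing in u if ε(γ) = +1 and increasing in u if ε(γ) = −1. Equivalently, the logarithmic derivative ∂_u log w^u_n(γ) = E^{n+ε(γ),u}_γ[|φ⁻¹(0)|] − Ē^{n,u}_γ[|φ⁻¹(0)|] has the sign −ε(γ). -/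
open Finset
open scoped ENNReal

instance (x y : V) : Decidable (adj x y) := by unfold adj; infer_instance

def nbrs (y : V) : Finset V :=
  {(y.1 + 1, y.2), (y.1 - 1, y.2), (y.1, y.2 + 1), (y.1, y.2 - 1)}

def bdry (Λ : Finset V) : Finset V := (Λ.biUnion nbrs) \ Λ

noncomputable def ham (Λ : Finset V) (ψ : V → ℤ) (φ : V → ℤ) : ℝ :=
  (1 / 2) * ∑ x ∈ Λ, ∑ y ∈ Λ.filter (fun y => adj x y), |(φ x : ℝ) - (φ y : ℝ)|
    + ∑ x ∈ Λ, ∑ y ∈ (bdry Λ).filter (fun y => adj x y), |(φ x : ℝ) - (ψ y : ℝ)|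

/-- `|γ̃|`: the length of the contour whose interior is `Λ`. -/
def clen (Λ : Finset V) : ℕ := ∑ x ∈ Λ, ((nbrs x).filter (fun y => y ∉ Λ)).card

/-- `Δ⁻_γ`: the internal neighbourhood of the contour whose interior is `Λ`. -/
def innerBdry (Λ : Finset V) : Finset V := Λ.filter (fun x => ∃ y ∈ nbrs x, y ∉ Λ)

def ext0 (Λ : Finset V) (φ : {x // x ∈ Λ} → ℤ) : V → ℤ :=
  fun y => if hy : y ∈ Λ then φ ⟨y, hy⟩ else 0

/-- `z^h_n(γ)` over `Ω⁺[γ,n]`. -/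
noncomputable def zPart (β h : ℝ) (Λ : Finset V) (ε n : ℤ) : ℝ≥0∞ :=
  if n < 0 then 0 else
  ∑' φ : {φ : {x // x ∈ Λ} → ℤ //
      (∀ x, 0 ≤ φ x) ∧ ∀ x : {x // x ∈ Λ}, ↑x ∈ innerBdry Λ → 0 ≤ ε * (φ x - n)},
    ENNReal.ofReal (Real.exp (-β * ham Λ (fun _ => n) (ext0 Λ φ.1)
      + h * ((Λ.attach.filter (fun x => φ.1 x = 0)).card : ℝ)))

/-- `z̄^h_n(γ)` over `Ω̄⁺[γ,n]`. -/
noncomputable def zbarPart (β h : ℝ) (Λ : Finset V) (ε n : ℤ) : ℝ≥0∞ :=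
  if n < 0 then 0 else
  ∑' φ : {φ : {x // x ∈ Λ} → ℤ //
      (∀ x, 0 ≤ φ x) ∧ (∀ x : {x // x ∈ Λ}, ↑x ∈ innerBdry Λ → 0 ≤ ε * (φ x - n)) ∧
      ∃ x : {x // x ∈ Λ}, ↑x ∈ innerBdry Λ ∧ φ x = n},
    ENNReal.ofReal (Real.exp (-β * ham Λ (fun _ => n) (ext0 Λ φ.1)
      + h * ((Λ.attach.filter (fun x => φ.1 x = 0)).card : ℝ)))

/-- The contour weight `w^u_n(γ) = e^{−β|γ̃|} z^h_{n+ε(γ)}(γ)/z̄^h_n(γ)`, `h = u + h_w(β)`. -/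
noncomputable def cweight (β hw : ℝ) (Λ : Finset V) (ε n : ℤ) (u : ℝ) : ℝ≥0∞ :=
  ENNReal.ofReal (Real.exp (-β * (clen Λ : ℝ)))
    * zPart β (u + hw) Λ ε (n + ε) / zbarPart β (u + hw) Λ ε n

/-! ### Auxiliary lemmas -/

section Aux

abbrev Cfg (Λ : Finset V) := {x // x ∈ Λ} → ℤ

lemma mem_nbrs {x y : V} : y ∈ nbrs x ↔ adj x y := by
  rcases x with ⟨x1, x2⟩; rcases y with ⟨y1, y2⟩
  simp only [nbrs, Finset.mem_insert, Finset.mem_singleton, Prod.ext_iff, adj]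
  rcases abs_cases (x1 - y1) with ⟨e1, _⟩ | ⟨e1, _⟩ <;>
    rcases abs_cases (x2 - y2) with ⟨e2, _⟩ | ⟨e2, _⟩ <;> rw [e1, e2] <;> omega

lemma filter_bdry_eq {Λ : Finset V} {x : V} (hx : x ∈ Λ) :
    (bdry Λ).filter (fun y => adj x y) = (nbrs x).filter (fun y => y ∉ Λ) := by
  ext y
  simp only [Finset.mem_filter, bdry, Finset.mem_sdiff, Finset.mem_biUnion]
  constructor
  · rintro ⟨⟨-, hyΛ⟩, hadj⟩
    exact ⟨mem_nbrs.mpr hadj, hyΛ⟩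
  · rintro ⟨hyx, hyΛ⟩
    exact ⟨⟨⟨x, hx, hyx⟩, hyΛ⟩, mem_nbrs.mp hyx⟩

lemma mem_innerBdry_of {Λ : Finset V} {x y : V} (hx : x ∈ Λ)
    (hy : y ∈ (bdry Λ).filter (fun y => adj x y)) : x ∈ innerBdry Λ := by
  rw [filter_bdry_eq hx, Finset.mem_filter] at hy
  exact Finset.mem_filter.mpr ⟨hx, y, hy.1, hy.2⟩

lemma abs_sub_sup_inf (p q r s : ℝ) :
    |p ⊔ q - r ⊔ s| + |p ⊓ q - r ⊓ s| ≤ |p - r| + |q - s| := by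
  rcases le_total p q with h1 | h1 <;> rcases le_total r s with h2 | h2 <;>

    [rw [max_eq_right h1, max_eq_right h2, min_eq_left h1, min_eq_left h2];
     rw [max_eq_right h1, max_eq_left h2, min_eq_left h1, min_eq_right h2];
     rw [max_eq_left h1, max_eq_right h2, min_eq_right h1, min_eq_left h2];
     rw [max_eq_left h1, max_eq_left h2, min_eq_right h1, min_eq_right h2]] <;>
  · rcases abs_cases (p - r) with ⟨e1, _⟩ | ⟨e1, _⟩ <;>
      rcases abs_cases (q - s) with ⟨e2, _⟩ | ⟨e2, _⟩ <;>
      rcases abs_cases (p - s) with ⟨e3, _⟩ | ⟨e3, _⟩ <;>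
      rcases abs_cases (q - r) with ⟨e4, _⟩ | ⟨e4, _⟩ <;>
      rw [e1, e2] <;> linarith


lemma ext0_sup {Λ : Finset V} (a b : Cfg Λ) (x : V) :
    ext0 Λ (a ⊔ b) x = ext0 Λ a x ⊔ ext0 Λ b x := by
  unfold ext0; by_cases hx : x ∈ Λ <;> simp [hx, Pi.sup_apply]

lemma ext0_inf {Λ : Finset V} (a b : Cfg Λ) (x : V) :
    ext0 Λ (a ⊓ b) x = ext0 Λ a x ⊓ ext0 Λ b x := by
  unfold ext0; by_cases hx : x ∈ Λ <;> simp [hx, Pi.inf_apply]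

end Aux

section Ham

variable {Λ : Finset V}

lemma ham_submod (β : ℝ) (hβ : 0 ≤ β) (m : ℤ) (a b : Cfg Λ) :
    ham Λ (fun _ => m) (ext0 Λ (a ⊔ b)) + ham Λ (fun _ => m) (ext0 Λ (a ⊓ b))
      ≤ ham Λ (fun _ => m) (ext0 Λ a) + ham Λ (fun _ => m) (ext0 Λ b) := by
  unfold ham
  have hint :
      (∑ x ∈ Λ, ∑ y ∈ Λ.filter (fun y => adj x y),
          |(ext0 Λ (a ⊔ b) x : ℝ) - (ext0 Λ (a ⊔ b) y : ℝ)|)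
        + ∑ x ∈ Λ, ∑ y ∈ Λ.filter (fun y => adj x y),
          |(ext0 Λ (a ⊓ b) x : ℝ) - (ext0 Λ (a ⊓ b) y : ℝ)|
      ≤ (∑ x ∈ Λ, ∑ y ∈ Λ.filter (fun y => adj x y), |(ext0 Λ a x : ℝ) - (ext0 Λ a y : ℝ)|)
        + ∑ x ∈ Λ, ∑ y ∈ Λ.filter (fun y => adj x y), |(ext0 Λ b x : ℝ) - (ext0 Λ b y : ℝ)| := by
    rw [← Finset.sum_add_distrib, ← Finset.sum_add_distrib]
    refine Finset.sum_le_sum fun x _ => ?_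
    rw [← Finset.sum_add_distrib, ← Finset.sum_add_distrib]
    refine Finset.sum_le_sum fun y _ => ?_
    rw [ext0_sup, ext0_sup, ext0_inf, ext0_inf]
    push_cast
    exact abs_sub_sup_inf _ _ _ _
  have hbd :
      (∑ x ∈ Λ, ∑ y ∈ (bdry Λ).filter (fun y => adj x y),
          |(ext0 Λ (a ⊔ b) x : ℝ) - ((m : ℤ) : ℝ)|)
        + ∑ x ∈ Λ, ∑ y ∈ (bdry Λ).filter (fun y => adj x y),
          |(ext0 Λ (a ⊓ b) x : ℝ) - ((m : ℤ) : ℝ)|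
      ≤ (∑ x ∈ Λ, ∑ y ∈ (bdry Λ).filter (fun y => adj x y), |(ext0 Λ a x : ℝ) - ((m : ℤ) : ℝ)|)
        + ∑ x ∈ Λ, ∑ y ∈ (bdry Λ).filter (fun y => adj x y),
          |(ext0 Λ b x : ℝ) - ((m : ℤ) : ℝ)| := by
    rw [← Finset.sum_add_distrib, ← Finset.sum_add_distrib]
    refine Finset.sum_le_sum fun x _ => ?_
    rw [← Finset.sum_add_distrib, ← Finset.sum_add_distrib]
    refine Finset.sum_le_sum fun y _ => ?_
    rw [ext0_sup, ext0_inf]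
    push_cast
    have := abs_sub_sup_inf (ext0 Λ a x : ℝ) (ext0 Λ b x : ℝ) (m : ℝ) (m : ℝ)
    simpa using this
  linarith

lemma ham_shift (β : ℝ) (m m' : ℤ) (φ : Cfg Λ)
    (hφ : ∀ x : {x // x ∈ Λ}, ↑x ∈ innerBdry Λ →
      |(φ x : ℝ) - (m : ℝ)| = |(φ x : ℝ) - (m' : ℝ)| + 1) :
    ham Λ (fun _ => m) (ext0 Λ φ) = ham Λ (fun _ => m') (ext0 Λ φ) + (clen Λ : ℝ) := by
  unfold ham
  have hb : (∑ x ∈ Λ, ∑ y ∈ (bdry Λ).filter (fun y => adj x y),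
        |(ext0 Λ φ x : ℝ) - ((m : ℤ) : ℝ)|)
      = (∑ x ∈ Λ, ∑ y ∈ (bdry Λ).filter (fun y => adj x y),
        (|(ext0 Λ φ x : ℝ) - ((m' : ℤ) : ℝ)| + 1)) := by
    refine Finset.sum_congr rfl fun x hx => ?_
    refine Finset.sum_congr rfl fun y hy => ?_
    have hxi : x ∈ innerBdry Λ := mem_innerBdry_of hx hy
    have : ext0 Λ φ x = φ ⟨x, hx⟩ := by unfold ext0; rw [dif_pos hx]
    rw [this]
    exact hφ ⟨x, hx⟩ hxi
  rw [hb]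
  have hc : ∀ x ∈ Λ, (∑ y ∈ (bdry Λ).filter (fun y => adj x y),
        (|(ext0 Λ φ x : ℝ) - ((m' : ℤ) : ℝ)| + 1))
      = (∑ y ∈ (bdry Λ).filter (fun y => adj x y), |(ext0 Λ φ x : ℝ) - ((m' : ℤ) : ℝ)|)
        + (((nbrs x).filter (fun y => y ∉ Λ)).card : ℝ) := by
    intro x hx
    rw [Finset.sum_add_distrib, filter_bdry_eq hx]; simp
  rw [Finset.sum_congr rfl hc, Finset.sum_add_distrib]
  have hclen : (∑ x ∈ Λ, (((nbrs x).filter (fun y => y ∉ Λ)).card : ℝ)) = (clen Λ : ℝ) := by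
    rw [clen]; push_cast; rfl
  rw [hclen]
  ring

end Ham

section Count

variable {Λ : Finset V}

/-- number of zeros of a configuration -/
def Ncard (Λ : Finset V) (φ : Cfg Λ) : ℕ := (Λ.attach.filter (fun x => φ x = 0)).card

lemma Ncard_le_card (φ : Cfg Λ) : Ncard Λ φ ≤ Λ.card := by
  unfold Ncard
  exact le_trans (Finset.card_filter_le _ _) (le_of_eq (Finset.card_attach))

lemma Ncard_inf_add_sup (a b : Cfg Λ) (ha : ∀ x, 0 ≤ a x) (hb : ∀ x, 0 ≤ b x) :
    Ncard Λ (a ⊓ b) + Ncard Λ (a ⊔ b) = Ncard Λ a + Ncard Λ b := by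
  unfold Ncard
  have h1 : Λ.attach.filter (fun x => (a ⊓ b) x = 0)
      = Λ.attach.filter (fun x => a x = 0) ∪ Λ.attach.filter (fun x => b x = 0) := by
    ext x
    simp only [Finset.mem_filter, Finset.mem_union, Finset.mem_attach, true_and, Pi.inf_apply]
    have h1 := ha x; have h2 := hb x
    rcases le_total (a x) (b x) with h | h
    · rw [inf_eq_left.mpr h]; omega
    · rw [inf_eq_right.mpr h]; omega
  have h2 : Λ.attach.filter (fun x => (a ⊔ b) x = 0)
      = Λ.attach.filter (fun x => a x = 0) ∩ Λ.attach.filter (fun x => b x = 0) := by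
    ext x
    simp only [Finset.mem_filter, Finset.mem_inter, Finset.mem_attach, true_and, Pi.sup_apply]
    have h1 := ha x; have h2 := hb x
    rcases le_total (a x) (b x) with h | h
    · rw [sup_eq_right.mpr h]; omega
    · rw [sup_eq_left.mpr h]; omega
  rw [h1, h2, add_comm, Finset.card_inter_add_card_union]

lemma Ncard_le_inf_left (a b : Cfg Λ) (hb : ∀ x, 0 ≤ b x) :
    Ncard Λ a ≤ Ncard Λ (a ⊓ b) := by
  unfold Ncard
  refine Finset.card_le_card fun x hx => ?_
  simp only [Finset.mem_filter, Finset.mem_attach, true_and] at hx ⊢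
  rw [Pi.inf_apply, hx, inf_eq_left]
  rw [hx] at *
  exact hb x

lemma Ncard_le_inf_right (a b : Cfg Λ) (ha : ∀ x, 0 ≤ a x) :
    Ncard Λ b ≤ Ncard Λ (a ⊓ b) := by
  rw [inf_comm]; exact Ncard_le_inf_left b a ha

end Count

section TsumFour

open scoped NNReal FinsetFamily

lemma tsum_four {α : Type*} [DistribLattice α] [DecidableEq α] (f₁ f₂ f₃ f₄ : α → ℝ≥0∞)
    (h₁ : ∀ a, f₁ a ≠ ⊤) (h₂ : ∀ a, f₂ a ≠ ⊤) (h₃ : ∀ a, f₃ a ≠ ⊤) (h₄ : ∀ a, f₄ a ≠ ⊤)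
    (h : ∀ a b, f₁ a * f₂ b ≤ f₃ (a ⊓ b) * f₄ (a ⊔ b)) :
    (∑' a, f₁ a) * ∑' a, f₂ a ≤ (∑' a, f₃ a) * ∑' a, f₄ a := by
  rw [ENNReal.tsum_eq_iSup_sum (f := f₁), ENNReal.iSup_mul]
  refine iSup_le fun s => ?_
  rw [ENNReal.tsum_eq_iSup_sum (f := f₂), ENNReal.mul_iSup]
  refine iSup_le fun t => ?_
  have key := four_functions_theorem (fun a => (f₁ a).toNNReal) (fun a => (f₂ a).toNNReal)
      (fun a => (f₃ a).toNNReal) (fun a => (f₄ a).toNNReal)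
      (fun a => zero_le) (fun a => zero_le) (fun a => zero_le) (fun a => zero_le)
      (fun a b => by
        have h' := h a b
        have : (f₁ a * f₂ b).toNNReal ≤ (f₃ (a ⊓ b) * f₄ (a ⊔ b)).toNNReal :=
          (ENNReal.toNNReal_le_toNNReal (ENNReal.mul_ne_top (h₁ a) (h₂ b))
            (ENNReal.mul_ne_top (h₃ _) (h₄ _))).mpr h'
        simpa [ENNReal.toNNReal_mul] using this) s t
  have e1 : (∑ a ∈ s, f₁ a) * ∑ a ∈ t, f₂ a
      = ((((∑ a ∈ s, (f₁ a).toNNReal) * ∑ a ∈ t, (f₂ a).toNNReal : ℝ≥0)) : ℝ≥0∞) := by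
    push_cast
    congr 1 <;> exact Finset.sum_congr rfl fun a _ => (ENNReal.coe_toNNReal (by solve_by_elim)).symm
  have e2 : ((((∑ a ∈ s ⊼ t, (f₃ a).toNNReal) * ∑ a ∈ s ⊻ t, (f₄ a).toNNReal : ℝ≥0)) : ℝ≥0∞)
      = (∑ a ∈ s ⊼ t, f₃ a) * ∑ a ∈ s ⊻ t, f₄ a := by
    push_cast
    congr 1 <;> exact Finset.sum_congr rfl fun a _ => (ENNReal.coe_toNNReal (by solve_by_elim))
  calc (∑ a ∈ s, f₁ a) * ∑ a ∈ t, f₂ a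
      = _ := e1
    _ ≤ _ := ENNReal.coe_le_coe.mpr key
    _ = (∑ a ∈ s ⊼ t, f₃ a) * ∑ a ∈ s ⊻ t, f₄ a := e2
    _ ≤ (∑' a, f₃ a) * ∑' a, f₄ a := mul_le_mul' (ENNReal.sum_le_tsum _) (ENNReal.sum_le_tsum _)

end TsumFour

section Zparts

variable {Λ : Finset V}

noncomputable def wt (β h : ℝ) (Λ : Finset V) (m : ℤ) (φ : Cfg Λ) : ℝ≥0∞ :=
  ENNReal.ofReal (Real.exp (-β * ham Λ (fun _ => m) (ext0 Λ φ)
    + h * ((Λ.attach.filter (fun x => φ x = 0)).card : ℝ)))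

def Pz (Λ : Finset V) (ε m : ℤ) : Set (Cfg Λ) :=
  {φ | (∀ x, 0 ≤ φ x) ∧ ∀ x : {x // x ∈ Λ}, ↑x ∈ innerBdry Λ → 0 ≤ ε * (φ x - m)}

def Pbar (Λ : Finset V) (ε m : ℤ) : Set (Cfg Λ) :=
  {φ | (∀ x, 0 ≤ φ x) ∧ (∀ x : {x // x ∈ Λ}, ↑x ∈ innerBdry Λ → 0 ≤ ε * (φ x - m)) ∧
    ∃ x : {x // x ∈ Λ}, ↑x ∈ innerBdry Λ ∧ φ x = m}

lemma wt_ne_zero (β h : ℝ) (m : ℤ) (φ : Cfg Λ) : wt β h Λ m φ ≠ 0 :=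
  (ENNReal.ofReal_pos.mpr (Real.exp_pos _)).ne'

lemma wt_ne_top (β h : ℝ) (m : ℤ) (φ : Cfg Λ) : wt β h Λ m φ ≠ ⊤ :=
  ENNReal.ofReal_ne_top

lemma wt_mono {β h h' : ℝ} (hh : h ≤ h') (m : ℤ) (φ : Cfg Λ) :
    wt β h Λ m φ ≤ wt β h' Λ m φ := by
  unfold wt
  refine ENNReal.ofReal_le_ofReal (Real.exp_le_exp.mpr (add_le_add_right ?_ _))
  exact mul_le_mul_of_nonneg_right hh (Nat.cast_nonneg _)

lemma wt_factor (β : ℝ) {h h' : ℝ} (m : ℤ) (φ : Cfg Λ) :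
    wt β h' Λ m φ = wt β h Λ m φ
      * ENNReal.ofReal (Real.exp ((h' - h) * ((Λ.attach.filter (fun x => φ x = 0)).card : ℝ))) := by
  unfold wt
  rw [← ENNReal.ofReal_mul (Real.exp_nonneg _), ← Real.exp_add]
  congr 2
  ring

lemma zPart_eq (β h : ℝ) (ε m : ℤ) (hm : ¬ m < 0) :
    zPart β h Λ ε m = ∑' φ : Cfg Λ, (Pz Λ ε m).indicator (wt β h Λ m) φ := by
  rw [zPart, if_neg hm, ← tsum_subtype (Pz Λ ε m) (wt β h Λ m)]
  rfl

lemma zbar_eq (β h : ℝ) (ε m : ℤ) (hm : ¬ m < 0) :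
    zbarPart β h Λ ε m = ∑' φ : Cfg Λ, (Pbar Λ ε m).indicator (wt β h Λ m) φ := by
  rw [zbarPart, if_neg hm, ← tsum_subtype (Pbar Λ ε m) (wt β h Λ m)]
  rfl

lemma zbar_mono (β : ℝ) {h h' : ℝ} (hh : h ≤ h') (ε m : ℤ) :
    zbarPart β h Λ ε m ≤ zbarPart β h' Λ ε m := by
  unfold zbarPart
  split_ifs
  · exact le_rfl
  · exact ENNReal.tsum_le_tsum fun φ => wt_mono hh m φ.1

lemma zbar_bound (β : ℝ) {h h' : ℝ} (hh : h ≤ h') (ε m : ℤ) :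
    zbarPart β h' Λ ε m
      ≤ ENNReal.ofReal (Real.exp ((h' - h) * (Λ.card : ℝ))) * zbarPart β h Λ ε m := by
  unfold zbarPart
  split_ifs
  · simp
  · rw [← ENNReal.tsum_mul_left]
    refine ENNReal.tsum_le_tsum fun φ => ?_
    have := wt_factor (Λ := Λ) β (h := h) (h' := h') m φ.1
    refine le_trans (le_of_eq this) ?_
    rw [mul_comm]
    refine mul_le_mul' (ENNReal.ofReal_le_ofReal (Real.exp_le_exp.mpr ?_)) le_rfl
    refine mul_le_mul_of_nonneg_left ?_ (by linarith)
    exact_mod_cast Ncard_le_card (Λ := Λ) φ.1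

lemma zbar_eq_zero (β h : ℝ) (ε m : ℤ) (hm : ¬ m < 0) (he : ¬ (Pbar Λ ε m).Nonempty) :
    zbarPart β h Λ ε m = 0 := by
  rw [zbar_eq β h ε m hm]
  refine ENNReal.tsum_eq_zero.mpr fun φ => ?_
  exact Set.indicator_of_notMem (fun hφ => he ⟨φ, hφ⟩) _

lemma zbar_ne_zero (β h : ℝ) (ε m : ℤ) (hm : ¬ m < 0) (he : (Pbar Λ ε m).Nonempty) :
    zbarPart β h Λ ε m ≠ 0 := by
  obtain ⟨φ, hφ⟩ := he
  rw [zbar_eq β h ε m hm]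
  refine ne_of_gt (lt_of_lt_of_le ?_ (ENNReal.le_tsum φ))
  rw [Set.indicator_of_mem hφ]
  exact (ENNReal.ofReal_pos.mpr (Real.exp_pos _))

lemma zPart_ne_zero (β h : ℝ) (ε m : ℤ) (hm : ¬ m < 0) : zPart β h Λ ε m ≠ 0 := by
  have hmem : (fun _ => m) ∈ Pz Λ ε m := by
    refine ⟨fun x => show (0:ℤ) ≤ m by omega, fun x _ => by simp⟩
  rw [zPart_eq β h ε m hm]
  refine ne_of_gt (lt_of_lt_of_le ?_ (ENNReal.le_tsum (fun _ => m)))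
  rw [Set.indicator_of_mem hmem]
  exact (ENNReal.ofReal_pos.mpr (Real.exp_pos _))

end Zparts

section Cross

variable {Λ : Finset V}

lemma wt_shift (β h : ℝ) {ε n : ℤ} (hε : ε = 1 ∨ ε = -1) (φ : Cfg Λ)
    (hφ : φ ∈ Pz Λ ε (n + ε)) :
    wt β h Λ (n + ε) φ = ENNReal.ofReal (Real.exp (β * (clen Λ : ℝ))) * wt β h Λ n φ := by
  have hham : ham Λ (fun _ => n) (ext0 Λ φ)
      = ham Λ (fun _ => (n + ε)) (ext0 Λ φ) + (clen Λ : ℝ) := by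
    refine ham_shift β n (n + ε) φ (fun x hx => ?_)
    have hb := hφ.2 x hx
    rcases hε with hε | hε <;> subst hε
    · have h1 : (n : ℝ) + 1 ≤ (φ x : ℝ) := by exact_mod_cast (by omega : n + 1 ≤ φ x)
      rw [abs_of_nonneg (by push_cast; linarith), abs_of_nonneg (by push_cast; linarith)]
      push_cast; ring
    · have h1 : (φ x : ℝ) ≤ (n : ℝ) - 1 := by exact_mod_cast (by omega : φ x ≤ n - 1)
      rw [abs_of_nonpos (by push_cast; linarith), abs_of_nonpos (by push_cast; linarith)]
      push_cast; ring
  unfold wt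
  rw [← ENNReal.ofReal_mul (Real.exp_nonneg _), ← Real.exp_add]
  congr 2
  rw [hham]
  ring

lemma zPart_shift (β h : ℝ) {ε n : ℤ} (hε : ε = 1 ∨ ε = -1) (hm : ¬ (n + ε) < 0) :
    zPart β h Λ ε (n + ε) = ENNReal.ofReal (Real.exp (β * (clen Λ : ℝ)))
      * ∑' φ : Cfg Λ, (Pz Λ ε (n + ε)).indicator (wt β h Λ n) φ := by
  rw [zPart_eq β h ε (n + ε) hm, ← ENNReal.tsum_mul_left]
  refine tsum_congr fun φ => ?_
  by_cases hφ : φ ∈ Pz Λ ε (n + ε)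
  · rw [Set.indicator_of_mem hφ, Set.indicator_of_mem hφ, wt_shift β h hε φ hφ]
  · rw [Set.indicator_of_notMem hφ, Set.indicator_of_notMem hφ, mul_zero]

lemma cross_pos (β : ℝ) (hβ : 0 < β) {h h' : ℝ} (hh : h ≤ h') {n : ℤ} (hn : 0 ≤ n) :
    zPart β h' Λ 1 (n + 1) * zbarPart β h Λ 1 n
      ≤ zPart β h Λ 1 (n + 1) * zbarPart β h' Λ 1 n := by
  have hm1 : ¬ (n + 1) < 0 := by omega
  have hm0 : ¬ n < 0 := by omega
  have hfac : wt β h' Λ n = fun φ : Cfg Λ => wt β h Λ n φ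
      * ENNReal.ofReal (Real.exp ((h' - h) * ((Λ.attach.filter (fun x => φ x = 0)).card : ℝ))) :=
    funext fun φ => wt_factor β n φ
  rw [zPart_shift β h' (Or.inl rfl) hm1, zPart_shift β h (Or.inl rfl) hm1,
    zbar_eq β h 1 n hm0, zbar_eq β h' 1 n hm0, hfac]
  rw [mul_assoc, mul_assoc]
  refine mul_le_mul_right ?_ _
  have main := tsum_four
    (f₁ := (Pz Λ 1 (n + 1)).indicator (fun φ : Cfg Λ => wt β h Λ n φ
      * ENNReal.ofReal (Real.exp ((h' - h) * ((Λ.attach.filter (fun x => φ x = 0)).card : ℝ)))))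
    (f₂ := (Pbar Λ 1 n).indicator (wt β h Λ n))
    (f₃ := (Pbar Λ 1 n).indicator (fun φ : Cfg Λ => wt β h Λ n φ
      * ENNReal.ofReal (Real.exp ((h' - h) * ((Λ.attach.filter (fun x => φ x = 0)).card : ℝ)))))
    (f₄ := (Pz Λ 1 (n + 1)).indicator (wt β h Λ n))
    (fun a => by
      by_cases ha : a ∈ Pz Λ 1 (n + 1)
      · rw [Set.indicator_of_mem ha]
        exact ENNReal.mul_ne_top (wt_ne_top _ _ _ _) ENNReal.ofReal_ne_top
      · rw [Set.indicator_of_notMem ha]; exact ENNReal.zero_ne_top)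
    (fun a => by
      by_cases ha : a ∈ Pbar Λ 1 n
      · rw [Set.indicator_of_mem ha]; exact wt_ne_top _ _ _ _
      · rw [Set.indicator_of_notMem ha]; exact ENNReal.zero_ne_top)
    (fun a => by
      by_cases ha : a ∈ Pbar Λ 1 n
      · rw [Set.indicator_of_mem ha]
        exact ENNReal.mul_ne_top (wt_ne_top _ _ _ _) ENNReal.ofReal_ne_top
      · rw [Set.indicator_of_notMem ha]; exact ENNReal.zero_ne_top)
    (fun a => by
      by_cases ha : a ∈ Pz Λ 1 (n + 1)
      · rw [Set.indicator_of_mem ha]; exact wt_ne_top _ _ _ _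
      · rw [Set.indicator_of_notMem ha]; exact ENNReal.zero_ne_top)
    (fun a b => ?_)
  · exact main.trans (le_of_eq (mul_comm _ _))
  -- the four-functions hypothesis
  by_cases haS : a ∈ Pz Λ 1 (n + 1)
  swap
  · rw [Set.indicator_of_notMem haS, zero_mul]; exact zero_le
  by_cases hbT : b ∈ Pbar Λ 1 n
  swap
  · rw [Set.indicator_of_notMem hbT, mul_zero]; exact zero_le
  obtain ⟨ha0, haB⟩ := haS
  obtain ⟨hb0, hbB, x₀, hx₀, hbx₀⟩ := hbT
  have haS : a ∈ Pz Λ 1 (n + 1) := ⟨ha0, haB⟩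
  have hbT : b ∈ Pbar Λ 1 n := ⟨hb0, hbB, x₀, hx₀, hbx₀⟩
  have hTinf : a ⊓ b ∈ Pbar Λ 1 n := by
    refine ⟨fun x => ?_, fun x hx => ?_, x₀, hx₀, ?_⟩
    · have := ha0 x; have := hb0 x
      rw [Pi.inf_apply]; exact le_inf ‹0 ≤ a x› ‹0 ≤ b x›
    · have h1 := haB x hx; have h2 := hbB x hx
      rw [Pi.inf_apply]
      rcases le_total (a x) (b x) with hab | hab
      · rw [inf_eq_left.mpr hab]; omega
      · rw [inf_eq_right.mpr hab]; omega
    · have h1 := haB x₀ hx₀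
      rw [Pi.inf_apply, hbx₀, inf_eq_right.mpr (by omega : n ≤ a x₀)]
  have hSsup : a ⊔ b ∈ Pz Λ 1 (n + 1) := by
    refine ⟨fun x => ?_, fun x hx => ?_⟩
    · have := ha0 x
      rw [Pi.sup_apply]; exact le_sup_of_le_left ‹0 ≤ a x›
    · have h1 := haB x hx
      rw [Pi.sup_apply]
      rcases le_total (a x) (b x) with hab | hab
      · rw [sup_eq_right.mpr hab]; omega
      · rw [sup_eq_left.mpr hab]; omega
  rw [Set.indicator_of_mem haS, Set.indicator_of_mem hbT,
    Set.indicator_of_mem hTinf, Set.indicator_of_mem hSsup]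
  have hsub := ham_submod β hβ.le n a b
  have hNmod := Ncard_inf_add_sup a b ha0 hb0
  have hNle := Ncard_le_inf_left a b hb0
  unfold Ncard at hNmod hNle
  unfold wt
  rw [← ENNReal.ofReal_mul (Real.exp_nonneg _), ← Real.exp_add,
    ← ENNReal.ofReal_mul (Real.exp_nonneg _), ← Real.exp_add,
    ← ENNReal.ofReal_mul (Real.exp_nonneg _), ← Real.exp_add,
    ← ENNReal.ofReal_mul (Real.exp_nonneg _), ← Real.exp_add]
  refine ENNReal.ofReal_le_ofReal (Real.exp_le_exp.mpr ?_)
  have e1 : h * ((Λ.attach.filter (fun x => a x = 0)).card : ℝ)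
        + h * ((Λ.attach.filter (fun x => b x = 0)).card : ℝ)
      = h * ((Λ.attach.filter (fun x => (a ⊓ b) x = 0)).card : ℝ)
        + h * ((Λ.attach.filter (fun x => (a ⊔ b) x = 0)).card : ℝ) := by
    rw [← mul_add, ← mul_add]
    congr 1
    exact_mod_cast hNmod.symm
  have e2 : (h' - h) * ((Λ.attach.filter (fun x => a x = 0)).card : ℝ)
      ≤ (h' - h) * ((Λ.attach.filter (fun x => (a ⊓ b) x = 0)).card : ℝ) := by
    refine mul_le_mul_of_nonneg_left ?_ (by linarith)
    exact_mod_cast hNle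
  have e3 : β * (ham Λ (fun _ => n) (ext0 Λ (a ⊔ b)) + ham Λ (fun _ => n) (ext0 Λ (a ⊓ b)))
      ≤ β * (ham Λ (fun _ => n) (ext0 Λ a) + ham Λ (fun _ => n) (ext0 Λ b)) :=
    mul_le_mul_of_nonneg_left hsub hβ.le
  nlinarith [e1, e2, e3]

end Cross

lemma cross_neg {Λ : Finset V} (β : ℝ) (hβ : 0 < β) {h h' : ℝ} (hh : h ≤ h') {n : ℤ}
    (hn : 1 ≤ n) :
    zPart β h Λ (-1) (n + -1) * zbarPart β h' Λ (-1) n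
      ≤ zPart β h' Λ (-1) (n + -1) * zbarPart β h Λ (-1) n := by
  have hm1 : ¬ (n + -1) < 0 := by omega
  have hm0 : ¬ n < 0 := by omega
  have hfac : wt β h' Λ n = fun φ : Cfg Λ => wt β h Λ n φ
      * ENNReal.ofReal (Real.exp ((h' - h) * ((Λ.attach.filter (fun x => φ x = 0)).card : ℝ))) :=
    funext fun φ => wt_factor β n φ
  rw [zPart_shift β h' (Or.inr rfl) hm1, zPart_shift β h (Or.inr rfl) hm1,
    zbar_eq β h (-1) n hm0, zbar_eq β h' (-1) n hm0, hfac]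
  rw [mul_assoc, mul_assoc]
  refine mul_le_mul_right ?_ _
  have main := tsum_four
    (f₁ := (Pz Λ (-1) (n + -1)).indicator (wt β h Λ n))
    (f₂ := (Pbar Λ (-1) n).indicator (fun φ : Cfg Λ => wt β h Λ n φ
      * ENNReal.ofReal (Real.exp ((h' - h) * ((Λ.attach.filter (fun x => φ x = 0)).card : ℝ)))))
    (f₃ := (Pz Λ (-1) (n + -1)).indicator (fun φ : Cfg Λ => wt β h Λ n φ
      * ENNReal.ofReal (Real.exp ((h' - h) * ((Λ.attach.filter (fun x => φ x = 0)).card : ℝ)))))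
    (f₄ := (Pbar Λ (-1) n).indicator (wt β h Λ n))
    (fun a => by
      by_cases ha : a ∈ Pz Λ (-1) (n + -1)
      · rw [Set.indicator_of_mem ha]; exact wt_ne_top _ _ _ _
      · rw [Set.indicator_of_notMem ha]; exact ENNReal.zero_ne_top)
    (fun a => by
      by_cases ha : a ∈ Pbar Λ (-1) n
      · rw [Set.indicator_of_mem ha]
        exact ENNReal.mul_ne_top (wt_ne_top _ _ _ _) ENNReal.ofReal_ne_top
      · rw [Set.indicator_of_notMem ha]; exact ENNReal.zero_ne_top)
    (fun a => by
      by_cases ha : a ∈ Pz Λ (-1) (n + -1)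
      · rw [Set.indicator_of_mem ha]
        exact ENNReal.mul_ne_top (wt_ne_top _ _ _ _) ENNReal.ofReal_ne_top
      · rw [Set.indicator_of_notMem ha]; exact ENNReal.zero_ne_top)
    (fun a => by
      by_cases ha : a ∈ Pbar Λ (-1) n
      · rw [Set.indicator_of_mem ha]; exact wt_ne_top _ _ _ _
      · rw [Set.indicator_of_notMem ha]; exact ENNReal.zero_ne_top)
    (fun a b => ?_)
  · exact main
  by_cases haS : a ∈ Pz Λ (-1) (n + -1)
  swap
  · rw [Set.indicator_of_notMem haS, zero_mul]; exact zero_le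
  by_cases hbT : b ∈ Pbar Λ (-1) n
  swap
  · rw [Set.indicator_of_notMem hbT, mul_zero]; exact zero_le
  obtain ⟨ha0, haB⟩ := haS
  obtain ⟨hb0, hbB, x₀, hx₀, hbx₀⟩ := hbT
  have haS : a ∈ Pz Λ (-1) (n + -1) := ⟨ha0, haB⟩
  have hbT : b ∈ Pbar Λ (-1) n := ⟨hb0, hbB, x₀, hx₀, hbx₀⟩
  have hSinf : a ⊓ b ∈ Pz Λ (-1) (n + -1) := by
    refine ⟨fun x => ?_, fun x hx => ?_⟩
    · have := ha0 x; have := hb0 x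
      rw [Pi.inf_apply]; exact le_inf ‹0 ≤ a x› ‹0 ≤ b x›
    · have h1 := haB x hx
      rw [Pi.inf_apply]
      rcases le_total (a x) (b x) with hab | hab
      · rw [inf_eq_left.mpr hab]; omega
      · rw [inf_eq_right.mpr hab]; omega
  have hTsup : a ⊔ b ∈ Pbar Λ (-1) n := by
    refine ⟨fun x => ?_, fun x hx => ?_, x₀, hx₀, ?_⟩
    · have := ha0 x
      rw [Pi.sup_apply]; exact le_sup_of_le_left ‹0 ≤ a x›
    · have h1 := haB x hx; have h2 := hbB x hx
      rw [Pi.sup_apply]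
      rcases le_total (a x) (b x) with hab | hab
      · rw [sup_eq_right.mpr hab]; omega
      · rw [sup_eq_left.mpr hab]; omega
    · have h1 := haB x₀ hx₀
      rw [Pi.sup_apply, hbx₀, sup_eq_right.mpr (by omega : a x₀ ≤ n)]
  rw [Set.indicator_of_mem haS, Set.indicator_of_mem hbT,
    Set.indicator_of_mem hSinf, Set.indicator_of_mem hTsup]
  have hsub := ham_submod β hβ.le n a b
  have hNmod := Ncard_inf_add_sup a b ha0 hb0
  have hNle := Ncard_le_inf_right a b ha0
  unfold Ncard at hNmod hNle
  unfold wt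
  rw [← ENNReal.ofReal_mul (Real.exp_nonneg _), ← Real.exp_add,
    ← ENNReal.ofReal_mul (Real.exp_nonneg _), ← Real.exp_add,
    ← ENNReal.ofReal_mul (Real.exp_nonneg _), ← Real.exp_add,
    ← ENNReal.ofReal_mul (Real.exp_nonneg _), ← Real.exp_add]
  refine ENNReal.ofReal_le_ofReal (Real.exp_le_exp.mpr ?_)
  have e1 : h * ((Λ.attach.filter (fun x => a x = 0)).card : ℝ)
        + h * ((Λ.attach.filter (fun x => b x = 0)).card : ℝ)
      = h * ((Λ.attach.filter (fun x => (a ⊓ b) x = 0)).card : ℝ)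
        + h * ((Λ.attach.filter (fun x => (a ⊔ b) x = 0)).card : ℝ) := by
    rw [← mul_add, ← mul_add]
    congr 1
    exact_mod_cast hNmod.symm
  have e2 : (h' - h) * ((Λ.attach.filter (fun x => b x = 0)).card : ℝ)
      ≤ (h' - h) * ((Λ.attach.filter (fun x => (a ⊓ b) x = 0)).card : ℝ) := by
    refine mul_le_mul_of_nonneg_left ?_ (by linarith)
    exact_mod_cast hNle
  have e3 : β * (ham Λ (fun _ => n) (ext0 Λ (a ⊔ b)) + ham Λ (fun _ => n) (ext0 Λ (a ⊓ b)))
      ≤ β * (ham Λ (fun _ => n) (ext0 Λ a) + ham Λ (fun _ => n) (ext0 Λ b)) :=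
    mul_le_mul_of_nonneg_left hsub hβ.le
  nlinarith [e1, e2, e3]

lemma zPart_of_neg {Λ : Finset V} (β h : ℝ) (ε m : ℤ) (hm : m < 0) : zPart β h Λ ε m = 0 := by
  rw [zPart, if_pos hm]

lemma ennreal_div_le_div {a b c d : ℝ≥0∞} (hb0 : b ≠ 0) (hb : b ≠ ⊤) (hd0 : d ≠ 0) (hd : d ≠ ⊤)
    (hx : a * d ≤ c * b) : a / b ≤ c / d := by
  rw [ENNReal.div_le_iff hb0 hb, div_eq_mul_inv, mul_right_comm, ← div_eq_mul_inv,
    ENNReal.le_div_iff_mul_le (Or.inl hd0) (Or.inl hd)]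
  exact hx

/-- Monotonicity of contour weights in `u`: for a positive contour `u ↦ w^u_n(γ)` is
nonincreasing, while for a negative contour it is nondecreasing. -/
theorem contour_weight_monotonicity (β hw : ℝ) (hβ : 0 < β)
    (Λ : Finset V) (n : ℤ) (hn : 0 ≤ n) :
    Antitone (fun u : ℝ => cweight β hw Λ 1 n u) ∧
    Monotone (fun u : ℝ => cweight β hw Λ (-1) n u) := by

  constructor
  · -- positive contours: antitone
    intro u u' huu'
    have hh : u + hw ≤ u' + hw := by linarith
    have hm0 : ¬ n < 0 := by omega
    have hm1 : ¬ (n + 1) < 0 := by omega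
    simp only [cweight]
    by_cases hD' : zbarPart β (u' + hw) Λ 1 n = ⊤
    · rw [hD', ENNReal.div_top]; exact zero_le
    by_cases hD'0 : zbarPart β (u' + hw) Λ 1 n = 0
    · have hD0 : zbarPart β (u + hw) Λ 1 n = 0 :=
        le_antisymm (hD'0 ▸ zbar_mono β hh 1 n) (zero_le)
      rw [hD0, ENNReal.div_zero (mul_ne_zero (ENNReal.ofReal_pos.mpr (Real.exp_pos _)).ne'
        (zPart_ne_zero β (u + hw) 1 (n + 1) hm1))]
      exact le_top
    · have hne : (Pbar Λ 1 n).Nonempty := by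
        by_contra hne
        exact hD'0 (zbar_eq_zero β (u' + hw) 1 n hm0 hne)
      have hD0 : zbarPart β (u + hw) Λ 1 n ≠ 0 := zbar_ne_zero β (u + hw) 1 n hm0 hne
      have hDt : zbarPart β (u + hw) Λ 1 n ≠ ⊤ :=
        fun hc => hD' (top_unique (hc ▸ zbar_mono β hh 1 n))
      refine ennreal_div_le_div hD'0 hD' hD0 hDt ?_
      rw [mul_assoc, mul_assoc]
      exact mul_le_mul_right (cross_pos β hβ hh hn) _
  · -- negative contours: monotone
    intro u u' huu'
    have hh : u + hw ≤ u' + hw := by linarith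
    have hm0 : ¬ n < 0 := by omega
    simp only [cweight]
    rcases (by omega : n = 0 ∨ 1 ≤ n) with rfl | hn1
    · rw [zPart_of_neg β (u + hw) (-1) (0 + -1) (by omega), mul_zero, ENNReal.zero_div]
      exact zero_le
    have hm1 : ¬ (n + -1) < 0 := by omega
    by_cases hD : zbarPart β (u + hw) Λ (-1) n = ⊤
    · rw [hD, ENNReal.div_top]; exact zero_le
    by_cases hD0 : zbarPart β (u + hw) Λ (-1) n = 0
    · have hne : ¬ (Pbar Λ (-1) n).Nonempty := by
        intro hne
        exact zbar_ne_zero β (u + hw) (-1) n hm0 hne hD0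
      rw [zbar_eq_zero β (u' + hw) (-1) n hm0 hne,
        ENNReal.div_zero (mul_ne_zero (ENNReal.ofReal_pos.mpr (Real.exp_pos _)).ne'
          (zPart_ne_zero β (u' + hw) (-1) (n + -1) hm1))]
      exact le_top
    · have hne : (Pbar Λ (-1) n).Nonempty := by
        by_contra hne
        exact hD0 (zbar_eq_zero β (u + hw) (-1) n hm0 hne)
      have hD'0 : zbarPart β (u' + hw) Λ (-1) n ≠ 0 := zbar_ne_zero β (u' + hw) (-1) n hm0 hne
      have hD't : zbarPart β (u' + hw) Λ (-1) n ≠ ⊤ := by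
        intro hc
        have hb := zbar_bound (Λ := Λ) β hh (-1) n
        rw [hc, top_le_iff] at hb
        rcases ENNReal.mul_eq_top.mp hb with ⟨-, hc2⟩ | ⟨hc1, -⟩
        · exact hD hc2
        · exact ENNReal.ofReal_ne_top hc1
      refine ennreal_div_le_div hD0 hD hD'0 hD't ?_
      rw [mul_assoc, mul_assoc]
      exact mul_le_mul_right (cross_neg β hβ hh hn1) _
end

section
/- For every finite domain Λ ⊂ ℤ², β ≥ β₀ sufficiently large, and every integer ℓ ≥ 4, the sum over collections Γ of pairwise externally compatible geometric contours in Λ each of length at least 2ℓ satisfies Σ_Γ exp(−2^{−ℓ}|Λ∖Γ̄| − (β/2)L(Γ)) ≤ 1, where Γ̄ is the union of the interiors and L(Γ) the total length. -/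
/-!
Put `a = 2^{-ℓ}` and factor `exp (-a |Λ \ Γ̄|) = exp (-a |Λ|) ∏_{γ ∈ Γ} exp (a |γ̄|)`. A collection
of contours with disjoint interiors in a domain `D` is built point by point in lexicographic
order: the minimal point of `D` is either uncovered or the minimal point of the one contour
covering it, so the sum over collections of products of contour weights is at most `(1 + u)^|D|`,
where `u` bounds the total weight of the contours with a prescribed minimal point. By the `9^l`
counting bound and `β` large, `u ≤ 2^{-(ℓ+1)}` as soon as `a |γ̄| ≤ l` for every contour of length
`2l ≥ 2ℓ`. When `|Λ| ≤ 4^ℓ` this follows from `|γ̄| ≤ min (l², |Λ|) ≤ 2^ℓ l`, and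
`(1 + u)^|Λ| ≤ exp (a |Λ|)` gives the claim. For larger `Λ` the sum is nondecreasing in `ℓ`: the
contours of length exactly `2ℓ` are resummed inside the complement `D` of the longer ones, using
up half of `exp (-a |D|)`; the other half is the volume term of the sum at level `ℓ + 1`.
-/

open scoped ENNReal

def lexLe (a b : ℤ × ℤ) : Prop := a.1 < b.1 ∨ (a.1 = b.1 ∧ a.2 ≤ b.2)

def IsLexMin (s : Finset (ℤ × ℤ)) (x : ℤ × ℤ) : Prop := x ∈ s ∧ ∀ y ∈ s, lexLe x y

lemma exists_isLexMin {D : Finset (ℤ × ℤ)} (hD : D.Nonempty) : ∃ x, IsLexMin D x := by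
  obtain ⟨x, hx, hmin⟩ := D.exists_min_image (fun p => toLex p) hD
  exact ⟨x, hx, fun y hy => Prod.Lex.le_iff.mp (hmin y hy)⟩

lemma IsLexMin.mono {D s : Finset (ℤ × ℤ)} {x : ℤ × ℤ} (hx : IsLexMin D x) (hxs : x ∈ s)
    (hsD : s ⊆ D) : IsLexMin s x :=
  ⟨hxs, fun y hy => hx.2 y (hsD hy)⟩

lemma two_inv_pow_mul_le_of_le_sq {n l ℓ : ℕ} (hl : n ≤ l ^ 2) (hℓ : n ≤ 4 ^ ℓ) :
    (2⁻¹ : ℝ) ^ ℓ * n ≤ l := by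
  have hn : n ≤ 2 ^ ℓ * l := by
    rcases le_or_gt l (2 ^ ℓ) with h | h
    · calc n ≤ l * l := by rwa [← sq]
        _ ≤ 2 ^ ℓ * l := Nat.mul_le_mul_right l h
    · calc n ≤ 2 ^ ℓ * 2 ^ ℓ := by rwa [← mul_pow]
        _ ≤ 2 ^ ℓ * l := Nat.mul_le_mul_left _ h.le
  calc (2⁻¹ : ℝ) ^ ℓ * n ≤ 2⁻¹ ^ ℓ * (2 ^ ℓ * l) := by gcongr; exact_mod_cast hn
    _ = l := by rw [← mul_assoc, ← mul_pow]; norm_num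

lemma sq_le_four_pow (n : ℕ) : n ^ 2 ≤ 4 ^ n :=
  calc n ^ 2 ≤ (2 ^ n) ^ 2 := Nat.pow_le_pow_left Nat.lt_two_pow_self.le 2
    _ = 4 ^ n := by rw [← pow_mul, mul_comm, pow_mul]; norm_num

lemma nine_pow_mul_exp_le {β : ℝ} (hβ : 100 ≤ β) {ℓ l : ℕ} (hℓ : 2 ≤ ℓ) (hl : ℓ ≤ l) :
    9 ^ l * Real.exp ((1 - β) * l) ≤ (2⁻¹ : ℝ) ^ (ℓ + 2) * 2⁻¹ ^ l := by
  have hexp : 9 * Real.exp (1 - β) ≤ 8⁻¹ := by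
    have h72 : 72 ≤ Real.exp (β - 1) := by linarith [Real.add_one_le_exp (β - 1)]
    rw [show 1 - β = -(β - 1) by ring, Real.exp_neg]
    calc 9 * (Real.exp (β - 1))⁻¹ ≤ 9 * 72⁻¹ := by gcongr
      _ = 8⁻¹ := by norm_num
  calc 9 ^ l * Real.exp ((1 - β) * l) = (9 * Real.exp (1 - β)) ^ l := by
        rw [mul_pow, ← Real.exp_nat_mul, mul_comm (l : ℝ)]
    _ ≤ (4⁻¹ * 2⁻¹) ^ l := by norm_num at hexp ⊢; gcongr
    _ = ((2⁻¹) ^ 2) ^ l * 2⁻¹ ^ l := by rw [mul_pow]; norm_num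
    _ ≤ (2⁻¹ : ℝ) ^ (ℓ + 2) * 2⁻¹ ^ l := by
        rw [← pow_mul]
        exact mul_le_mul_of_nonneg_right
          (pow_le_pow_of_le_one (by norm_num) (by norm_num) (by omega)) (by positivity)

section Compatible

variable {C : Type*} {intr : C → Finset (ℤ × ℤ)}

variable (intr) in
def compatibleIn (D : Finset (ℤ × ℤ)) : Set (Finset C) :=
  {Γ | (∀ γ ∈ Γ, intr γ ⊆ D) ∧ (Γ : Set C).PairwiseDisjoint intr}

lemma compatibleIn_empty_subset (hne : ∀ γ, (intr γ).Nonempty) :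
    compatibleIn intr ∅ ⊆ {∅} := by
  rintro Γ ⟨hΓ, -⟩
  refine Finset.eq_empty_of_forall_notMem fun γ hγ => ?_
  obtain ⟨y, hy⟩ := hne γ
  simpa using hΓ γ hγ hy

lemma compatibleIn_subset_union_image_insert [DecidableEq C] {D : Finset (ℤ × ℤ)}
    {x : ℤ × ℤ} (hx : IsLexMin D x) :
    compatibleIn intr D ⊆ compatibleIn intr (D.erase x) ∪
      (fun p : C × Finset C => insert p.1 p.2) ''
        ({γ | IsLexMin (intr γ) x} ×ˢ compatibleIn intr (D.erase x)) := by
  rintro Γ ⟨hΓD, hΓdisj⟩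
  by_cases hxΓ : ∃ γ ∈ Γ, x ∈ intr γ
  · obtain ⟨γ, hγ, hxγ⟩ := hxΓ
    refine Or.inr ⟨(γ, Γ.erase γ), ⟨hx.mono hxγ (hΓD γ hγ), ?_, ?_⟩, Finset.insert_erase hγ⟩
    · intro γ' hγ' y hy
      obtain ⟨hne, hγ'Γ⟩ := Finset.mem_erase.mp hγ'
      refine Finset.mem_erase.mpr ⟨?_, hΓD γ' hγ'Γ hy⟩
      rintro rfl
      exact Finset.disjoint_left.mp (hΓdisj hγ'Γ hγ hne) hy hxγ
    · exact hΓdisj.subset (Finset.coe_subset.mpr (Finset.erase_subset γ Γ))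
  · push Not at hxΓ
    refine Or.inl ⟨fun γ hγ y hy => Finset.mem_erase.mpr ⟨?_, hΓD γ hγ hy⟩, hΓdisj⟩
    rintro rfl
    exact hxΓ γ hγ hy

lemma tsum_compatibleIn_prod_le_one_add_pow (hne : ∀ γ, (intr γ).Nonempty) (w : C → ℝ≥0∞)
    {u : ℝ≥0∞} (hu : ∀ x, ∑' γ : {γ // IsLexMin (intr γ) x}, w γ ≤ u) (D : Finset (ℤ × ℤ)) :
    ∑' Γ : compatibleIn intr D, ∏ γ ∈ Γ.1, w γ ≤ (1 + u) ^ D.card := by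
  classical
  induction D using Finset.strongInduction with
  | H D ih =>
    rcases D.eq_empty_or_nonempty with rfl | hD
    · calc ∑' Γ : compatibleIn intr ∅, ∏ γ ∈ Γ.1, w γ
          ≤ ∑' Γ : ({∅} : Set (Finset C)), ∏ γ ∈ Γ.1, w γ :=
            ENNReal.tsum_mono_subtype (fun Γ : Finset C => ∏ γ ∈ Γ, w γ)
              (compatibleIn_empty_subset hne)
        _ = (1 + u) ^ (∅ : Finset (ℤ × ℤ)).card := by simp
    obtain ⟨x, hx⟩ := exists_isLexMin hD
    set Z := ∑' Γ : compatibleIn intr (D.erase x), ∏ γ ∈ Γ.1, w γ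
    set B := {γ | IsLexMin (intr γ) x} ×ˢ compatibleIn intr (D.erase x)
    have hB : ∑' p : B, ∏ γ ∈ insert p.1.1 p.1.2, w γ
        = ∑' γ : {γ // IsLexMin (intr γ) x}, w γ * Z := by
      -- the contour through `x` is not among those avoiding `x`
      have hnotMem : ∀ p : B, p.1.1 ∉ p.1.2 := fun ⟨p, hγ, hΓ⟩ hmem =>
        (Finset.mem_erase.mp (hΓ.1 p.1 hmem hγ.1)).1 rfl
      rw [tsum_congr fun p => Finset.prod_insert (hnotMem p),
        ← (Equiv.Set.prod _ _).symm.tsum_eq, ENNReal.tsum_prod']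
      exact tsum_congr fun γ => ENNReal.tsum_mul_left (a := w γ)
    calc ∑' Γ : compatibleIn intr D, ∏ γ ∈ Γ.1, w γ
        ≤ Z + ∑' Γ : (fun p : C × Finset C => insert p.1 p.2) '' B, ∏ γ ∈ Γ.1, w γ :=
          (ENNReal.tsum_mono_subtype (fun Γ : Finset C => ∏ γ ∈ Γ, w γ)
            (compatibleIn_subset_union_image_insert hx)).trans
            (ENNReal.tsum_union_le (fun Γ : Finset C => ∏ γ ∈ Γ, w γ) _ _)
      _ ≤ Z + ∑' p : B, ∏ γ ∈ insert p.1.1 p.1.2, w γ := by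
          gcongr
          exact ENNReal.tsum_le_tsum_comp_of_surjective Set.imageFactorization_surjective
            (fun Γ => ∏ γ ∈ Γ.1, w γ)
      _ ≤ (1 + u) ^ (D.erase x).card + u * (1 + u) ^ (D.erase x).card := by
          rw [hB, ENNReal.tsum_mul_right]
          gcongr
          exacts [ih _ (Finset.erase_ssubset hx.1), hu x, ih _ (Finset.erase_ssubset hx.1)]
      _ = (1 + u) ^ D.card := by
          rw [← Finset.card_erase_add_one hx.1, pow_succ]
          ring

lemma ofReal_exp_mul_tsum_compatibleIn_le_one (hne : ∀ γ, (intr γ).Nonempty) (w : C → ℝ≥0∞)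
    {a : ℝ} (ha : 0 ≤ a) (hu : ∀ x, ∑' γ : {γ // IsLexMin (intr γ) x}, w γ ≤ ENNReal.ofReal a)
    (D : Finset (ℤ × ℤ)) :
    ENNReal.ofReal (Real.exp (-a * D.card)) * ∑' Γ : compatibleIn intr D, ∏ γ ∈ Γ.1, w γ ≤ 1 := by
  have hexp : 1 + ENNReal.ofReal a ≤ ENNReal.ofReal (Real.exp a) := by
    rw [← ENNReal.ofReal_one, ← ENNReal.ofReal_add zero_le_one ha]
    exact ENNReal.ofReal_le_ofReal (by linarith [Real.add_one_le_exp a])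
  calc ENNReal.ofReal (Real.exp (-a * D.card)) * ∑' Γ : compatibleIn intr D, ∏ γ ∈ Γ.1, w γ
      ≤ ENNReal.ofReal (Real.exp (-a * D.card)) * ENNReal.ofReal (Real.exp a) ^ D.card := by
        gcongr
        exact (tsum_compatibleIn_prod_le_one_add_pow hne w hu D).trans (by gcongr)
    _ = 1 := by
        rw [← ENNReal.ofReal_pow (Real.exp_nonneg _), ← Real.exp_nat_mul,
          ← ENNReal.ofReal_mul (Real.exp_nonneg _), ← Real.exp_add, neg_mul, mul_comm,
          neg_add_cancel, Real.exp_zero, ENNReal.ofReal_one]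

end Compatible

section Weights

variable {C : Type*} (len : C → ℕ) (intr : C → Finset (ℤ × ℤ))

noncomputable def contourWeight (a β : ℝ) (γ : C) : ℝ≥0∞ :=
  ENNReal.ofReal (Real.exp (a * (intr γ).card - β / 2 * len γ))

noncomputable def externalWeight (a β : ℝ) (Λ : Finset (ℤ × ℤ)) (Γ : Finset C) : ℝ≥0∞ :=
  ENNReal.ofReal (Real.exp (-a * (Λ \ Γ.biUnion intr).card - β / 2 * ∑ γ ∈ Γ, (len γ : ℝ)))

variable {len intr}

lemma contourWeight_le {a β : ℝ} {γ : C} (heven : Even (len γ))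
    (hcard : a * (intr γ).card ≤ (len γ / 2 : ℕ)) :
    contourWeight len intr a β γ ≤ ENNReal.ofReal (Real.exp ((1 - β) * (len γ / 2 : ℕ))) := by
  have hlen : (len γ : ℝ) = 2 * (len γ / 2 : ℕ) := by
    exact_mod_cast (Nat.two_mul_div_two_of_even heven).symm
  refine ENNReal.ofReal_le_ofReal (Real.exp_le_exp.mpr ?_)
  rw [hlen]
  linarith

lemma ite_contourWeight_le (heven : ∀ γ, Even (len γ))
    (hiso : ∀ γ, (intr γ).card ≤ (len γ / 2) ^ 2) {ℓ : ℕ} {P : C → Prop} [DecidablePred P]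
    (hP : ∀ γ, P γ → 2 * ℓ ≤ len γ ∧ (intr γ).card ≤ 4 ^ ℓ) (β : ℝ) (γ : C) :
    (if P γ then contourWeight len intr ((2⁻¹ : ℝ) ^ ℓ) β γ else 0)
      ≤ if ℓ ≤ len γ / 2 then ENNReal.ofReal (Real.exp ((1 - β) * (len γ / 2 : ℕ))) else 0 := by
  by_cases h : P γ
  · obtain ⟨hlen, hcard⟩ := hP γ h
    rw [if_pos h, if_pos (by omega)]
    exact contourWeight_le (heven γ) (two_inv_pow_mul_le_of_le_sq (hiso γ) hcard)
  · rw [if_neg h]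
    exact zero_le

lemma card_sdiff_biUnion_eq [DecidableEq C] {D : Finset (ℤ × ℤ)} {E : Finset C}
    (hE : E ∈ compatibleIn intr D) :
    ((D \ E.biUnion intr).card : ℝ) = D.card - ∑ γ ∈ E, ((intr γ).card : ℝ) := by
  have h := Finset.card_sdiff_add_card_eq_card (Finset.biUnion_subset.mpr hE.1)
  rw [Finset.card_biUnion hE.2] at h
  rw [eq_sub_iff_add_eq]
  exact_mod_cast h

lemma externalWeight_eq_mul_prod [DecidableEq C] {D : Finset (ℤ × ℤ)} {E : Finset C}
    (hE : E ∈ compatibleIn intr D) (a β : ℝ) :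
    externalWeight len intr a β D E
      = ENNReal.ofReal (Real.exp (-a * D.card)) * ∏ γ ∈ E, contourWeight len intr a β γ := by
  have hexp : -a * (D \ E.biUnion intr).card - β / 2 * ∑ γ ∈ E, (len γ : ℝ)
      = -a * D.card + ∑ γ ∈ E, (a * (intr γ).card - β / 2 * len γ) := by
    rw [card_sdiff_biUnion_eq hE, Finset.sum_sub_distrib, ← Finset.mul_sum, ← Finset.mul_sum]
    ring
  rw [externalWeight, hexp, Real.exp_add, ENNReal.ofReal_mul (Real.exp_nonneg _), Real.exp_sum,
    ENNReal.ofReal_prod_of_nonneg fun _ _ => Real.exp_nonneg _]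
  rfl

lemma externalWeight_union [DecidableEq C] {Λ : Finset (ℤ × ℤ)} {G E : Finset C}
    (hGE : Disjoint G E) (hE : E ∈ compatibleIn intr (Λ \ G.biUnion intr)) (a β : ℝ) :
    externalWeight len intr (2 * a) β Λ (G ∪ E)
      = externalWeight len intr a β Λ G * (ENNReal.ofReal
          (Real.exp (-a * (Λ \ G.biUnion intr).card)) *
            ∏ γ ∈ E, contourWeight len intr (2 * a) β γ) := by
  have hsplit : externalWeight len intr (2 * a) β Λ (G ∪ E)
      = ENNReal.ofReal (Real.exp (-(β / 2) * ∑ γ ∈ G, (len γ : ℝ)))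
        * externalWeight len intr (2 * a) β (Λ \ G.biUnion intr) E := by
    rw [externalWeight, externalWeight, ← ENNReal.ofReal_mul (Real.exp_nonneg _), ← Real.exp_add,
      Finset.union_biUnion, Finset.sdiff_union_distrib, ← Finset.sdiff_sdiff_left',
      Finset.sum_union hGE]
    ring_nf
  rw [hsplit, externalWeight_eq_mul_prod hE, ← mul_assoc, ← mul_assoc]
  congr 1
  rw [externalWeight, ← ENNReal.ofReal_mul (Real.exp_nonneg _),
    ← ENNReal.ofReal_mul (Real.exp_nonneg _), ← Real.exp_add, ← Real.exp_add]
  ring_nf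

end Weights

section LexMinSums

variable {C : Type*} {len : C → ℕ} {intr : C → Finset (ℤ × ℤ)}

lemma tsum_lexMin_le_tsum_nine_pow_mul (heven : ∀ γ, Even (len γ))
    (h9 : ∀ (x : ℤ × ℤ) (l : ℕ),
      {γ : C | len γ = 2 * l ∧ IsLexMin (intr γ) x}.Finite ∧
      {γ : C | len γ = 2 * l ∧ IsLexMin (intr γ) x}.ncard ≤ 9 ^ l)
    (w : C → ℝ≥0∞) (φ : ℕ → ℝ≥0∞) (hw : ∀ γ, w γ ≤ φ (len γ / 2)) (x : ℤ × ℤ) :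
    ∑' γ : {γ // IsLexMin (intr γ) x}, w γ ≤ ∑' l, 9 ^ l * φ l := by
  let S : ℕ → Set C := fun l => {γ | len γ = 2 * l ∧ IsLexMin (intr γ) x}
  let j : {γ // IsLexMin (intr γ) x} → Σ l, S l := fun γ =>
    ⟨len γ / 2, γ, (Nat.two_mul_div_two_of_even (heven γ)).symm, γ.2⟩
  have hj : Function.Injective j := fun γ γ' h => Subtype.ext (congrArg (fun p => p.2.1) h)
  have hS : ∀ l, ∑' _ : S l, φ l ≤ 9 ^ l * φ l := fun l => by
    have := (h9 x l).1.fintype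
    rw [tsum_fintype, Finset.sum_const, Finset.card_univ, nsmul_eq_mul,
      ← Nat.card_eq_fintype_card, Nat.card_coe_set_eq]
    gcongr
    exact_mod_cast (h9 x l).2
  calc ∑' γ : {γ // IsLexMin (intr γ) x}, w γ ≤ ∑' γ, φ (j γ).1 :=
        ENNReal.tsum_le_tsum fun γ => hw γ
    _ ≤ ∑' p : Σ l, S l, φ p.1 := ENNReal.tsum_comp_le_tsum_of_injective hj fun p => φ p.1
    _ = ∑' l, ∑' _ : S l, φ l := ENNReal.tsum_sigma' _
    _ ≤ ∑' l, 9 ^ l * φ l := ENNReal.tsum_le_tsum hS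

lemma tsum_lexMin_le_two_inv_pow (heven : ∀ γ, Even (len γ))
    (h9 : ∀ (x : ℤ × ℤ) (l : ℕ),
      {γ : C | len γ = 2 * l ∧ IsLexMin (intr γ) x}.Finite ∧
      {γ : C | len γ = 2 * l ∧ IsLexMin (intr γ) x}.ncard ≤ 9 ^ l)
    {β : ℝ} (hβ : 100 ≤ β) {ℓ : ℕ} (hℓ : 2 ≤ ℓ) (w : C → ℝ≥0∞)
    (hw : ∀ γ, w γ ≤ if ℓ ≤ len γ / 2 then
      ENNReal.ofReal (Real.exp ((1 - β) * (len γ / 2 : ℕ))) else 0)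
    (x : ℤ × ℤ) :
    ∑' γ : {γ // IsLexMin (intr γ) x}, w γ ≤ ENNReal.ofReal ((2⁻¹ : ℝ) ^ (ℓ + 1)) := by
  have hterm : ∀ l : ℕ, 9 ^ l * (if ℓ ≤ l then ENNReal.ofReal (Real.exp ((1 - β) * l)) else 0)
      ≤ ENNReal.ofReal ((2⁻¹ : ℝ) ^ (ℓ + 2)) * ENNReal.ofReal 2⁻¹ ^ l := by
    intro l
    split_ifs with hl
    · rw [← ENNReal.ofReal_pow (by norm_num), ← ENNReal.ofReal_mul (by positivity),
        ← ENNReal.ofReal_ofNat 9, ← ENNReal.ofReal_pow (by norm_num),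
        ← ENNReal.ofReal_mul (by positivity)]
      exact ENNReal.ofReal_le_ofReal (nine_pow_mul_exp_le hβ hℓ hl)
    · simp
  calc ∑' γ : {γ // IsLexMin (intr γ) x}, w γ
      ≤ ∑' l : ℕ, 9 ^ l * (if ℓ ≤ l then ENNReal.ofReal (Real.exp ((1 - β) * l)) else 0) :=
        tsum_lexMin_le_tsum_nine_pow_mul heven h9 w _ hw x
    _ ≤ ∑' l : ℕ, ENNReal.ofReal ((2⁻¹ : ℝ) ^ (ℓ + 2)) * ENNReal.ofReal 2⁻¹ ^ l :=
        ENNReal.tsum_le_tsum hterm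
    _ = ENNReal.ofReal ((2⁻¹ : ℝ) ^ (ℓ + 1)) := by
        rw [ENNReal.tsum_mul_left, ENNReal.tsum_geometric, ENNReal.ofReal_inv_of_pos two_pos,
          ENNReal.ofReal_ofNat, ENNReal.one_sub_inv_two, inv_inv, pow_succ,
          ENNReal.ofReal_mul (by positivity), ENNReal.ofReal_inv_of_pos two_pos,
          ENNReal.ofReal_ofNat, mul_assoc, ENNReal.inv_mul_cancel two_ne_zero ENNReal.ofNat_ne_top,
          mul_one]

end LexMinSums

section External

variable {C : Type*} (len : C → ℕ) (intr : C → Finset (ℤ × ℤ))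

structure IsContourSystem : Prop where
  even_len : ∀ γ, Even (len γ)
  nonempty_intr : ∀ γ, (intr γ).Nonempty
  card_intr_le : ∀ γ, (intr γ).card ≤ (len γ / 2) ^ 2
  lexMin_count : ∀ (x : ℤ × ℤ) (l : ℕ),
    {γ : C | len γ = 2 * l ∧ IsLexMin (intr γ) x}.Finite ∧
    {γ : C | len γ = 2 * l ∧ IsLexMin (intr γ) x}.ncard ≤ 9 ^ l

def admissible (Λ : Finset (ℤ × ℤ)) (ℓ : ℕ) : Set (Finset C) :=
  {Γ | (∀ γ ∈ Γ, 2 * ℓ ≤ len γ ∧ intr γ ⊆ Λ) ∧ (Γ : Set C).PairwiseDisjoint intr}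

noncomputable def externalContourSum (β : ℝ) (Λ : Finset (ℤ × ℤ)) (ℓ : ℕ) : ℝ≥0∞ :=
  ∑' Γ : admissible len intr Λ ℓ, externalWeight len intr ((2⁻¹ : ℝ) ^ ℓ) β Λ Γ

variable {len intr}

lemma admissible_subset_compatibleIn (Λ : Finset (ℤ × ℤ)) (ℓ : ℕ) :
    admissible len intr Λ ℓ ⊆ compatibleIn intr Λ :=
  fun _ hΓ => ⟨fun γ hγ => (hΓ.1 γ hγ).2, hΓ.2⟩

lemma filter_mem_compatibleIn_sdiff [DecidableEq C] {Λ : Finset (ℤ × ℤ)} {Γ : Finset C}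
    (hΓ : Γ ∈ compatibleIn intr Λ) (p : C → Prop) [DecidablePred p] :
    Γ.filter p ∈ compatibleIn intr (Λ \ (Γ.filter (¬ p ·)).biUnion intr) := by
  refine ⟨fun γ hγ y hy => Finset.mem_sdiff.mpr ⟨hΓ.1 γ (Finset.mem_of_mem_filter γ hγ) hy, ?_⟩,
    hΓ.2.subset (Finset.coe_subset.mpr (Finset.filter_subset p Γ))⟩
  intro hmem
  obtain ⟨γ', hγ', hy'⟩ := Finset.mem_biUnion.mp hmem
  rw [Finset.mem_filter] at hγ hγ'
  have hne : γ ≠ γ' := fun h => hγ'.2 (h ▸ hγ.2)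
  exact Finset.disjoint_left.mp (hΓ.2 hγ.1 hγ'.1 hne) hy hy'

lemma filter_mem_admissible_succ (heven : ∀ γ, Even (len γ)) {Λ : Finset (ℤ × ℤ)} {ℓ : ℕ}
    {Γ : Finset C} (hΓ : Γ ∈ admissible len intr Λ ℓ) :
    Γ.filter (fun γ => ¬ len γ = 2 * ℓ) ∈ admissible len intr Λ (ℓ + 1) := by
  refine ⟨fun γ hγ => ?_, hΓ.2.subset (Finset.coe_subset.mpr (Finset.filter_subset _ Γ))⟩
  rw [Finset.mem_filter] at hγ
  obtain ⟨hlen, hsub⟩ := hΓ.1 γ hγ.1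
  obtain ⟨m, hm⟩ := heven γ
  exact ⟨by omega, hsub⟩

lemma tsum_lexMin_ite_contourWeight_le (hC : IsContourSystem len intr) {β : ℝ} (hβ : 100 ≤ β)
    {ℓ : ℕ} (hℓ : 2 ≤ ℓ) {P : C → Prop} [DecidablePred P]
    (hP : ∀ γ, P γ → 2 * ℓ ≤ len γ ∧ (intr γ).card ≤ 4 ^ ℓ) (x : ℤ × ℤ) :
    ∑' γ : {γ // IsLexMin (intr γ) x},
        (if P γ then contourWeight len intr ((2⁻¹ : ℝ) ^ ℓ) β γ else 0)
      ≤ ENNReal.ofReal ((2⁻¹ : ℝ) ^ (ℓ + 1)) :=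
  tsum_lexMin_le_two_inv_pow hC.even_len hC.lexMin_count hβ hℓ _
    (ite_contourWeight_le hC.even_len hC.card_intr_le hP β) x

lemma externalContourSum_le_one_of_card_le (hC : IsContourSystem len intr) {β : ℝ}
    (hβ : 100 ≤ β) {Λ : Finset (ℤ × ℤ)} {ℓ : ℕ} (hℓ : 2 ≤ ℓ) (hΛ : Λ.card ≤ 4 ^ ℓ) :
    externalContourSum len intr β Λ ℓ ≤ 1 := by
  classical
  set a : ℝ := (2⁻¹ : ℝ) ^ ℓ
  let w : C → ℝ≥0∞ := fun γ =>
    if 2 * ℓ ≤ len γ ∧ intr γ ⊆ Λ then contourWeight len intr a β γ else 0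
  have hu : ∀ x, ∑' γ : {γ // IsLexMin (intr γ) x}, w γ ≤ ENNReal.ofReal a := fun x =>
    (tsum_lexMin_ite_contourWeight_le hC hβ hℓ
      (fun γ (h : 2 * ℓ ≤ len γ ∧ intr γ ⊆ Λ) => ⟨h.1, (Finset.card_le_card h.2).trans hΛ⟩)
      x).trans
      (ENNReal.ofReal_le_ofReal (pow_le_pow_of_le_one (by norm_num) (by norm_num) ℓ.le_succ))
  calc externalContourSum len intr β Λ ℓ
      = ∑' Γ : admissible len intr Λ ℓ,
          ENNReal.ofReal (Real.exp (-a * Λ.card)) * ∏ γ ∈ Γ.1, w γ := by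
        refine tsum_congr fun Γ => ?_
        rw [externalWeight_eq_mul_prod (admissible_subset_compatibleIn Λ ℓ Γ.2)]
        exact congrArg _ (Finset.prod_congr rfl fun γ hγ => (if_pos (Γ.2.1 γ hγ)).symm)
    _ ≤ ENNReal.ofReal (Real.exp (-a * Λ.card)) *
          ∑' Γ : compatibleIn intr Λ, ∏ γ ∈ Γ.1, w γ := by
        rw [ENNReal.tsum_mul_left]
        gcongr
        exact ENNReal.tsum_mono_subtype (fun Γ : Finset C => ∏ γ ∈ Γ, w γ)
          (admissible_subset_compatibleIn Λ ℓ)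
    _ ≤ 1 := ofReal_exp_mul_tsum_compatibleIn_le_one hC.nonempty_intr w (by positivity) hu Λ

lemma externalContourSum_le_succ (hC : IsContourSystem len intr) {β : ℝ} (hβ : 100 ≤ β)
    (Λ : Finset (ℤ × ℤ)) {ℓ : ℕ} (hℓ : 2 ≤ ℓ) :
    externalContourSum len intr β Λ ℓ ≤ externalContourSum len intr β Λ (ℓ + 1) := by
  classical
  have ha : (2⁻¹ : ℝ) ^ ℓ = 2 * 2⁻¹ ^ (ℓ + 1) := by rw [pow_succ]; ring
  set a : ℝ := (2⁻¹ : ℝ) ^ (ℓ + 1)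
  let p : C → Prop := fun γ => len γ = 2 * ℓ
  let w : C → ℝ≥0∞ := fun γ => if p γ then contourWeight len intr (2⁻¹ ^ ℓ) β γ else 0
  have hu : ∀ x, ∑' γ : {γ // IsLexMin (intr γ) x}, w γ ≤ ENNReal.ofReal a :=
    tsum_lexMin_ite_contourWeight_le hC hβ hℓ fun γ (h : len γ = 2 * ℓ) =>
      ⟨h.ge, (hC.card_intr_le γ).trans <| by
        rw [h, Nat.mul_div_cancel_left ℓ two_pos]; exact sq_le_four_pow ℓ⟩
  let inner : Finset C → Finset C → ℝ≥0∞ := fun G =>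
    (compatibleIn intr (Λ \ G.biUnion intr)).indicator fun E =>
      ENNReal.ofReal (Real.exp (-a * (Λ \ G.biUnion intr).card)) * ∏ γ ∈ E, w γ
  have hinner : ∀ G, ∑' E, inner G E ≤ 1 := fun G => by
    rw [← tsum_subtype, ENNReal.tsum_mul_left]
    exact ofReal_exp_mul_tsum_compatibleIn_le_one hC.nonempty_intr w (by positivity) hu _
  let Ψ : admissible len intr Λ ℓ → admissible len intr Λ (ℓ + 1) × Finset C := fun Γ =>
    (⟨Γ.1.filter (¬ p ·), filter_mem_admissible_succ hC.even_len Γ.2⟩, Γ.1.filter p)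
  have hΨ : Function.Injective Ψ := fun Γ Γ' h => Subtype.ext <| by
    rw [← Finset.filter_union_filter_not_eq p Γ.1, ← Finset.filter_union_filter_not_eq p Γ'.1]
    exact congrArg₂ (· ∪ ·) (congrArg Prod.snd h) (congrArg (·.1.1) h)
  let F : admissible len intr Λ (ℓ + 1) × Finset C → ℝ≥0∞ := fun q =>
    externalWeight len intr a β Λ q.1 * inner q.1 q.2
  have hF : ∀ Γ : admissible len intr Λ ℓ,
      externalWeight len intr ((2⁻¹ : ℝ) ^ ℓ) β Λ Γ = F (Ψ Γ) := fun Γ => by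
    have hE := filter_mem_compatibleIn_sdiff (admissible_subset_compatibleIn Λ ℓ Γ.2) p
    simp only [F, Ψ, inner, Set.indicator_of_mem hE]
    conv_lhs => rw [← Finset.filter_union_filter_not_eq p Γ.1, Finset.union_comm, ha]
    rw [externalWeight_union (Finset.disjoint_filter_filter_not _ _ p).symm hE, ← ha]
    congr 2
    exact Finset.prod_congr rfl fun γ hγ => (if_pos (Finset.mem_filter.mp hγ).2).symm
  calc externalContourSum len intr β Λ ℓ = ∑' Γ, F (Ψ Γ) := tsum_congr hF
    _ ≤ ∑' q, F q := ENNReal.tsum_comp_le_tsum_of_injective hΨ F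
    _ = ∑' G : admissible len intr Λ (ℓ + 1),
          externalWeight len intr a β Λ G * ∑' E, inner G E := by
        rw [ENNReal.tsum_prod']
        exact tsum_congr fun G => ENNReal.tsum_mul_left (a := externalWeight len intr a β Λ G)
    _ ≤ ∑' G : admissible len intr Λ (ℓ + 1), externalWeight len intr a β Λ G * 1 := by
        gcongr with G
        exact hinner G
    _ = externalContourSum len intr β Λ (ℓ + 1) := by simp_rw [mul_one]; rfl

theorem externalContourSum_le_one (hC : IsContourSystem len intr) {β : ℝ} (hβ : 100 ≤ β)
    (Λ : Finset (ℤ × ℤ)) {ℓ : ℕ} (hℓ : 2 ≤ ℓ) :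
    externalContourSum len intr β Λ ℓ ≤ 1 := by
  have hmono : ∀ m, ℓ ≤ m →
      externalContourSum len intr β Λ ℓ ≤ externalContourSum len intr β Λ m :=
    Nat.le_induction le_rfl fun m hm ih =>
      ih.trans (externalContourSum_le_succ hC hβ Λ (hℓ.trans hm))
  have hcard : Λ.card ≤ 4 ^ (ℓ + Λ.card) :=
    calc Λ.card ≤ 4 ^ Λ.card := (Nat.lt_pow_self (by norm_num)).le
      _ ≤ 4 ^ (ℓ + Λ.card) := Nat.pow_le_pow_right (by norm_num) (Nat.le_add_left _ _)
  exact (hmono _ (Nat.le_add_right ℓ _)).trans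
    (externalContourSum_le_one_of_card_le hC hβ (by omega) hcard)

end External

/-- For `β` large: for every finite domain `Λ ⊂ ℤ²` and every `ℓ ≥ 4`, the sum over
collections `Γ` of pairwise externally compatible (i.e. with disjoint interiors) geometric
contours in `Λ`, each of length at least `2ℓ`, satisfies
`Σ_Γ exp(−2^{−ℓ}|Λ∖Γ̄| − (β/2)L(Γ)) ≤ 1`.
Contours are axiomatized by their length and interior, with: lengths even and `≥ 4`,
nonempty interiors, the isoperimetric bound `|γ̄| ≤ (len γ/2)²`, and at most `9^l` contours
of length `2l` whose interior has a given lexicographically minimal point. -/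
theorem external_contour_collection_sum_bound :
    ∃ β₀ : ℝ, ∀ (C : Type) (len : C → ℕ) (intr : C → Finset (ℤ × ℤ)),
      (∀ γ, Even (len γ)) →
      (∀ γ, 4 ≤ len γ) →
      (∀ γ, (intr γ).Nonempty) →
      (∀ γ, (intr γ).card ≤ (len γ / 2) ^ 2) →
      (∀ (x : ℤ × ℤ) (l : ℕ),
        {γ : C | len γ = 2 * l ∧ IsLexMin (intr γ) x}.Finite ∧
        {γ : C | len γ = 2 * l ∧ IsLexMin (intr γ) x}.ncard ≤ 9 ^ l) →
      ∀ β : ℝ, β₀ ≤ β → ∀ (Λ : Finset (ℤ × ℤ)) (ℓ : ℕ), 4 ≤ ℓ →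
        (∑' Γ : {Γ : Finset C // (∀ γ ∈ Γ, 2 * ℓ ≤ len γ ∧ intr γ ⊆ Λ) ∧
              (Γ : Set C).Pairwise (fun γ γ' => Disjoint (intr γ) (intr γ'))},
          ENNReal.ofReal (Real.exp
            (-(2 : ℝ) ^ (-(ℓ : ℤ)) * ((Λ \ Γ.1.biUnion intr).card : ℝ)
              - (β / 2) * ∑ γ ∈ Γ.1, (len γ : ℝ)))) ≤ 1 := by
  refine ⟨100, fun C len intr heven _ hne hiso h9 β hβ Λ ℓ hℓ => ?_⟩
  rw [zpow_neg, zpow_natCast, ← inv_pow]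
  exact externalContourSum_le_one ⟨heven, hne, hiso, h9⟩ hβ Λ (by omega)
end
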